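/- arXiv:2310.18275 — 4 statements merged into one kernel-verified Lean document; each statement's English description precedes it below -/
import Mathlib

section
/- (Hook length formula of Frame–Robinson–Thrall) Let λ be a partition with n = |Y(λ)| boxes. Then |SYT(λ)| = n! / ∏_{c ∈ Y(λ)} h_λ(c). -/
/-- A partition, stored `0`-indexed: `p.f k` is the part `λ_{k+1}`. -/
structure YPartition where
  f : ℕ → ℕ
  antitone' : ∀ ⦃i j : ℕ⦄, i ≤ j → f j ≤ f i
  eventually_zero' : ∃ N : ℕ, ∀ i : ℕ, N ≤ i → f i = 0

namespace YPartition

/-- `p.get i` is the part `λ_i` of the partition `p = λ`, for `i ≥ 1`. -/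
def get (p : YPartition) (i : ℕ) : ℕ := p.f (i - 1)

/-- `μ ⊆ λ`, i.e. `μ_i ≤ λ_i` for all `i ≥ 1`. -/
def Sub (mu lam : YPartition) : Prop := ∀ i : ℕ, 1 ≤ i → mu.get i ≤ lam.get i

/-- The empty partition `∅ = (0, 0, 0, …)`. -/
def empty : YPartition where
  f := fun _ => 0
  antitone' := fun _ _ _ => le_rfl
  eventually_zero' := ⟨0, fun _ _ => rfl⟩

/-- The `k`-th entry `λ^t_k = |{i ≥ 1 : λ_i ≥ k}|` of the conjugate partition
(meaningful for `k ≥ 1`). -/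
noncomputable def conjGet (p : YPartition) (k : ℕ) : ℕ :=
  Set.ncard {i : ℕ | 1 ≤ i ∧ k ≤ p.get i}

/-- `Δ(λ) = {λ_i − i : i ≥ 1} ⊆ ℤ`. -/
def delta (p : YPartition) : Set ℤ :=
  {d : ℤ | ∃ i : ℕ, 1 ≤ i ∧ d = (p.get i : ℤ) - (i : ℤ)}

/-- `Δ(λ^t) = {λ^t_i − i : i ≥ 1} ⊆ ℤ`. -/
noncomputable def deltaConj (p : YPartition) : Set ℤ :=
  {d : ℤ | ∃ i : ℕ, 1 ≤ i ∧ d = (p.conjGet i : ℤ) - (i : ℤ)}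

/-- `μ ⋖ ν` : the partition `ν` is obtained from `μ` by increasing one entry by `1`. -/
def Covers (mu nu : YPartition) : Prop :=
  ∃ k : ℕ, 1 ≤ k ∧ nu.get k = mu.get k + 1 ∧
    ∀ i : ℕ, 1 ≤ i → i ≠ k → nu.get i = mu.get i

end YPartition

/-- The skew Young diagram `Y(λ/μ)`: all boxes `(i, j)` with `i ≥ 1` and `μ_i < j ≤ λ_i`. -/
def skewCells (lam mu : YPartition) : Set (ℕ × ℕ) :=
  {c : ℕ × ℕ | 1 ≤ c.1 ∧ mu.get c.1 < c.2 ∧ c.2 ≤ lam.get c.1}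

/-- The Young diagram `Y(λ) = Y(λ/∅)`. -/
def cells (lam : YPartition) : Set (ℕ × ℕ) := skewCells lam YPartition.empty

/-- The hook `H_λ(c)` of a box `c` in `Y(λ)`. -/
def hook (lam : YPartition) (c : ℕ × ℕ) : Set (ℕ × ℕ) :=
  {d : ℕ × ℕ | d ∈ cells lam ∧ ((d.1 = c.1 ∧ c.2 ≤ d.2) ∨ (d.2 = c.2 ∧ c.1 ≤ d.1))}

/-- The hook length `h_λ(c) = |H_λ(c)|`. -/
noncomputable def hookLength (lam : YPartition) (c : ℕ × ℕ) : ℕ := (hook lam c).ncard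

/-- An excited move replaces a box `(i, j)` of the diagram `D` by `(i+1, j+1)`, provided
that none of `(i+1, j)`, `(i, j+1)`, `(i+1, j+1)` lies in `D`. -/
def ExcitedMove (D E : Set (ℕ × ℕ)) : Prop :=
  ∃ i j : ℕ, (i, j) ∈ D ∧ (i + 1, j) ∉ D ∧ (i, j + 1) ∉ D ∧ (i + 1, j + 1) ∉ D ∧
    E = insert (i + 1, j + 1) (D \ {(i, j)})

/-- `E` is an excitation of `D`: it is obtained from `D` by a finite sequence of
excited moves. -/
def IsExcitation (D E : Set (ℕ × ℕ)) : Prop := Relation.ReflTransGen ExcitedMove D E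

/-- `𝓔(λ/μ)`: the set of all excitations `E` of `Y(μ)` satisfying `E ⊆ Y(λ)`. -/
def excitations (lam mu : YPartition) : Set (Set (ℕ × ℕ)) :=
  {E : Set (ℕ × ℕ) | IsExcitation (cells mu) E ∧ E ⊆ cells lam}

/-- Standard tableaux of shape `λ/μ`, encoded as functions `ℕ × ℕ → ℕ` that vanish outside
of `Y(λ/μ)`, restrict to a bijection `Y(λ/μ) → {1, …, n}` where `n = |Y(λ/μ)|`, and
increase left-to-right along rows and top-to-bottom down columns. -/
def SYT (lam mu : YPartition) : Set (ℕ × ℕ → ℕ) :=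
  {T : ℕ × ℕ → ℕ |
    (∀ c : ℕ × ℕ, c ∉ skewCells lam mu → T c = 0) ∧
    Set.BijOn T (skewCells lam mu) (Set.Icc 1 (skewCells lam mu).ncard) ∧
    (∀ i j : ℕ, (i, j) ∈ skewCells lam mu → (i, j + 1) ∈ skewCells lam mu →
      T (i, j) < T (i, j + 1)) ∧
    (∀ i j : ℕ, (i, j) ∈ skewCells lam mu → (i + 1, j) ∈ skewCells lam mu →
      T (i, j) < T (i + 1, j))}

/-- Semistandard tableaux of shape `μ`, encoded as functions `ℕ × ℕ → ℕ` that vanish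
outside of `Y(μ)`, take positive values on `Y(μ)`, increase weakly along rows and
strictly down columns. -/
def SSYT (mu : YPartition) : Set (ℕ × ℕ → ℕ) :=
  {T : ℕ × ℕ → ℕ |
    (∀ c : ℕ × ℕ, c ∉ cells mu → T c = 0) ∧
    (∀ c ∈ cells mu, 1 ≤ T c) ∧
    (∀ i j : ℕ, (i, j) ∈ cells mu → (i, j + 1) ∈ cells mu → T (i, j) ≤ T (i, j + 1)) ∧
    (∀ i j : ℕ, (i, j) ∈ cells mu → (i + 1, j) ∈ cells mu → T (i, j) < T (i + 1, j))}

/-- `b`-flagged semistandard tableaux of shape `μ`: all entries in row `i` are `≤ b i`. -/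
def FSSYT (mu : YPartition) (b : ℕ → ℕ) : Set (ℕ × ℕ → ℕ) :=
  {T ∈ SSYT mu | ∀ c ∈ cells mu, T c ≤ b c.1}

/-- The flagging induced by `λ/μ`: `b_i = max {k ≥ 0 : λ_k − k ≥ μ_i − i}`, where
`λ_0 = +∞` (so that `k = 0` always belongs to the set). -/
noncomputable def inducedFlagging (lam mu : YPartition) (i : ℕ) : ℕ :=
  sSup {k : ℕ | k = 0 ∨ (mu.get i : ℤ) - (i : ℤ) ≤ (lam.get k : ℤ) - (k : ℤ)}

/-- The diagram `D(T) = {(T(i,j), T(i,j) + j − i) : (i,j) ∈ Y(μ)}` associated to a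
semistandard tableau `T` of shape `μ` (note that `T(i,j) ≥ i` for semistandard `T`,
so the truncated subtraction is exact). -/
def excitedDiagram (mu : YPartition) (T : ℕ × ℕ → ℕ) : Set (ℕ × ℕ) :=
  (fun c : ℕ × ℕ => (T c, T c + c.2 - c.1)) '' cells mu

/-- The field of rational functions over `ℚ` in the indeterminates `z_i`, `i ∈ ℤ`. -/
abbrev KK : Type := FractionRing (MvPolynomial ℤ ℚ)

/-- The indeterminate `z_i` viewed inside `KK`. -/
noncomputable def Zvar (i : ℤ) : KK :=
  algebraMap (MvPolynomial ℤ ℚ) KK (MvPolynomial.X i)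

/-- The content `c_T(k) = j − i`, where `(i, j)` is the box of `T` containing the
entry `k`. -/
noncomputable def contentOf (T : ℕ × ℕ → ℕ) (k : ℕ) : ℤ :=
  ((Classical.epsilon fun c : ℕ × ℕ => T c = k).2 : ℤ) -
    ((Classical.epsilon fun c : ℕ × ℕ => T c = k).1 : ℤ)

/-- `z_T = 1 / ∏_{k=1}^n (z_{c_T(k)} + z_{c_T(k+1)} + ⋯ + z_{c_T(n)})` for a standard
tableau `T` of shape `λ/μ`, where `n = |Y(λ/μ)|`. -/
noncomputable def zT (lam mu : YPartition) (T : ℕ × ℕ → ℕ) : KK :=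
  (∏ k ∈ Finset.Icc 1 (skewCells lam mu).ncard,
    ∑ l ∈ Finset.Icc k (skewCells lam mu).ncard, Zvar (contentOf T l))⁻¹

/-- The algebraic hook length `h_λ(c; z) = Σ_{(i,j) ∈ H_λ(c)} z_{j−i}`. -/
noncomputable def hookZ (lam : YPartition) (c : ℕ × ℕ) : KK :=
  ∑ᶠ d ∈ hook lam c, Zvar ((d.2 : ℤ) - (d.1 : ℤ))

/-- The polynomial ring `ℤ[x_1, x_2, …, y_1, y_2, …]`. -/
abbrev Rxy : Type := MvPolynomial (ℕ ⊕ ℕ) ℤ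

/-- The indeterminate `x_i` for `i ≥ 1`, with the convention `x_i = 0` for `i ≤ 0`. -/
noncomputable def xv (i : ℤ) : Rxy :=
  if 1 ≤ i then MvPolynomial.X (Sum.inl i.toNat) else 0

/-- The indeterminate `y_i` for `i ≥ 1`, with the convention `y_i = 0` for `i ≤ 0`. -/
noncomputable def yv (i : ℤ) : Rxy :=
  if 1 ≤ i then MvPolynomial.X (Sum.inr i.toNat) else 0

/-- `s_λ[μ] = Σ_{D ∈ 𝓔(λ/μ)} ∏_{(i,j) ∈ D} (x_i + y_j)`. -/
noncomputable def slam (lam mu : YPartition) : Rxy :=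
  ∑ᶠ D ∈ excitations lam mu, ∏ᶠ c ∈ D, (xv (c.1 : ℤ) + yv (c.2 : ℤ))

/-- The `h`-polynomial `h(a, b, c) = Σ_{1 ≤ i_1 ≤ ⋯ ≤ i_a ≤ b} ∏_{j=1}^a
(x_{i_j} + y_{i_j + (j−1) + c})`, with `h(a, b, c) = 0` for `a < 0`
(and `h(0, b, c) = 1`). -/
noncomputable def hpoly (a : ℤ) (b : ℕ) (c : ℤ) : Rxy :=
  if a < 0 then 0
  else ∑ᶠ t ∈ {t : Fin a.toNat → ℕ | (∀ j, t j ∈ Finset.Icc 1 b) ∧ Monotone t},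
    ∏ j : Fin a.toNat, (xv (t j : ℤ) + yv ((t j : ℤ) + ((j : ℕ) : ℤ) + c))

/-- The element `h_{b; q}[d] = Σ_{1 ≤ i_1 ≤ ⋯ ≤ i_q ≤ b} ∏_{j=1}^q u_{i_j, j−d}` of `R`,
understood to be `0` if `q < 0` (and `1` if `q = 0`). -/
noncomputable def hGen {R : Type*} [CommRing R] (u : ℤ → ℤ → R) (b : ℕ) (q d : ℤ) : R :=
  if q < 0 then 0
  else ∑ᶠ t ∈ {t : Fin q.toNat → ℕ | (∀ j, t j ∈ Finset.Icc 1 b) ∧ Monotone t},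
    ∏ j : Fin q.toNat, u (t j : ℤ) (((j : ℕ) : ℤ) + 1 - d)

namespace HLF

open Finset

variable (lam : YPartition)

/-- `m` bounds the number of rows. -/
def Bnd (lam : YPartition) (m : ℕ) : Prop := ∀ i : ℕ, m < i → lam.get i = 0

theorem get_anti (lam : YPartition) {i j : ℕ} (h : i ≤ j) : lam.get j ≤ lam.get i :=
  lam.antitone' (Nat.sub_le_sub_right h 1)

theorem exists_bnd (lam : YPartition) : ∃ m : ℕ, Bnd lam m := by
  obtain ⟨N, hN⟩ := lam.eventually_zero'
  exact ⟨N + 1, fun i hi => hN (i - 1) (by omega)⟩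

theorem mem_cells {c : ℕ × ℕ} :
    c ∈ cells lam ↔ 1 ≤ c.1 ∧ 1 ≤ c.2 ∧ c.2 ≤ lam.get c.1 := by
  change 1 ≤ c.1 ∧ YPartition.empty.get c.1 < c.2 ∧ c.2 ≤ lam.get c.1 ↔ _
  have : YPartition.empty.get c.1 = 0 := rfl
  rw [this]
  omega

/-- The cells as a `Finset`. -/
def cellsF (lam : YPartition) (m : ℕ) : Finset (ℕ × ℕ) :=
  (Finset.Icc 1 m).biUnion fun i => {i} ×ˢ Finset.Icc 1 (lam.get i)

theorem mem_cellsF {m : ℕ} (hb : Bnd lam m) {c : ℕ × ℕ} :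
    c ∈ cellsF lam m ↔ c ∈ cells lam := by
  simp only [cellsF, Finset.mem_biUnion, Finset.mem_product, Finset.mem_Icc,
    Finset.mem_singleton, mem_cells]
  constructor
  · rintro ⟨i, ⟨hi1, him⟩, h1, h2⟩
    subst h1
    omega
  · rintro ⟨h1, h2, h3⟩
    refine ⟨c.1, ⟨h1, ?_⟩, rfl, h2, h3⟩
    by_contra h
    have := hb c.1 (by omega)
    omega

theorem coe_cellsF {m : ℕ} (hb : Bnd lam m) : (cellsF lam m : Set (ℕ × ℕ)) = cells lam := by
  ext c; simp [mem_cellsF lam hb]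

theorem card_cellsF (m : ℕ) : (cellsF lam m).card = ∑ i ∈ Finset.Icc 1 m, lam.get i := by
  rw [cellsF, Finset.card_biUnion]
  · refine Finset.sum_congr rfl fun i _ => ?_
    rw [Finset.card_product, Finset.card_singleton, one_mul, Nat.card_Icc]
    omega
  · intro i _ j _ hij
    simp only [Finset.disjoint_left, Finset.mem_product, Finset.mem_singleton]
    rintro ⟨a, b⟩ ⟨rfl, -⟩ ⟨rfl, -⟩
    exact hij rfl

theorem ncard_cells {m : ℕ} (hb : Bnd lam m) :
    (cells lam).ncard = ∑ i ∈ Finset.Icc 1 m, lam.get i := by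
  rw [← coe_cellsF lam hb, Set.ncard_coe_finset, card_cellsF]

theorem cells_finite : (cells lam).Finite := by
  obtain ⟨m, hm⟩ := exists_bnd lam
  rw [← coe_cellsF lam hm]
  exact (cellsF lam m).finite_toSet

/-- Number of boxes strictly below `(i,j)` in the diagram. -/
def aLen (lam : YPartition) (m i j : ℕ) : ℕ :=
  ((Finset.Ioc i m).filter fun k => j ≤ lam.get k).card

/-- The combinatorial hook length. -/
def hkl (lam : YPartition) (m i j : ℕ) : ℕ := lam.get i + 1 - j + aLen lam m i j

/-- The shifted first-column hook lengths. -/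
def ell (lam : YPartition) (m i : ℕ) : ℕ := lam.get i + (m - i)

/-- The hook as a finset. -/
def hookF (lam : YPartition) (m i j : ℕ) : Finset (ℕ × ℕ) :=
  {i} ×ˢ Finset.Icc j (lam.get i) ∪
    ((Finset.Ioc i m).filter fun k => j ≤ lam.get k) ×ˢ {j}

theorem coe_hookF {m i j : ℕ} (hb : Bnd lam m) (hi : 1 ≤ i) (hj : 1 ≤ j)
    (hji : j ≤ lam.get i) : (hookF lam m i j : Set (ℕ × ℕ)) = hook lam (i, j) := by
  ext ⟨a, b⟩
  simp only [hookF, Finset.coe_union, Set.mem_union, Finset.coe_product,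
    Finset.coe_singleton, Set.mem_prod, Set.mem_singleton_iff, Finset.mem_coe,
    Finset.mem_Icc, Finset.mem_filter, Finset.mem_Ioc, hook, Set.mem_setOf_eq, mem_cells]
  constructor
  · rintro (⟨rfl, hb1, hb2⟩ | ⟨⟨⟨ha1, ha2⟩, ha3⟩, rfl⟩)
    · exact ⟨⟨hi, by omega, hb2⟩, Or.inl ⟨rfl, hb1⟩⟩
    · exact ⟨⟨by omega, by omega, by omega⟩, Or.inr ⟨rfl, by omega⟩⟩
  · rintro ⟨⟨h1, h2, h3⟩, (⟨h4, h5⟩ | ⟨h4, h5⟩)⟩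
    · subst h4
      exact Or.inl ⟨rfl, h5, h3⟩
    · subst h4
      rcases eq_or_lt_of_le h5 with h6 | h6
      · exact Or.inl ⟨h6.symm, by omega⟩
      · refine Or.inr ⟨⟨⟨h6, ?_⟩, h3⟩, rfl⟩
        by_contra h
        have := hb a (by omega)
        omega

theorem hookLength_eq {m i j : ℕ} (hb : Bnd lam m) (hi : 1 ≤ i) (hj : 1 ≤ j)
    (hji : j ≤ lam.get i) : hookLength lam (i, j) = hkl lam m i j := by
  rw [hookLength, ← coe_hookF lam hb hi hj hji, Set.ncard_coe_finset]
  rw [hookF, Finset.card_union_of_disjoint, Finset.card_product, Finset.card_product]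
  · simp only [Finset.card_singleton, Nat.card_Icc, one_mul, mul_one, hkl, aLen]
  · simp only [Finset.disjoint_left, Finset.mem_product, Finset.mem_singleton,
      Finset.mem_filter, Finset.mem_Ioc]
    rintro ⟨a, b⟩ ⟨rfl, -⟩ ⟨⟨⟨h1, -⟩, -⟩, -⟩
    omega

end HLF
namespace HLF

open Finset

variable (lam : YPartition)

theorem ell_lt {m i k : ℕ} (hik : i < k) (hkm : k ≤ m) :
    ell lam m k < ell lam m i := by
  have h1 : lam.get k ≤ lam.get i := get_anti lam (le_of_lt hik)
  unfold ell
  omega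

theorem aLen_le {m i j : ℕ} : aLen lam m i j ≤ m - i := by
  have := Finset.card_filter_le (Finset.Ioc i m) (fun k => j ≤ lam.get k)
  rwa [Nat.card_Ioc] at this

theorem aLen_anti {m i j j' : ℕ} (h : j ≤ j') : aLen lam m i j' ≤ aLen lam m i j := by
  apply Finset.card_le_card
  intro k hk
  simp only [Finset.mem_filter] at hk ⊢
  exact ⟨hk.1, le_trans h hk.2⟩

theorem hkl_pos {m i j : ℕ} (hj : j ≤ lam.get i) : 1 ≤ hkl lam m i j := by
  unfold hkl; omega

/-- Key row computation. -/
theorem row_prod {m i : ℕ} (hi1 : 1 ≤ i) (him : i ≤ m) :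
    (∏ j ∈ Finset.Icc 1 (lam.get i), hkl lam m i j) *
      (∏ k ∈ Finset.Ioc i m, (ell lam m i - ell lam m k)) =
      Nat.factorial (ell lam m i) := by
  set A : Finset ℕ := (Finset.Ioc i m).image (fun k => ell lam m i - ell lam m k) with hA
  set B : Finset ℕ := (Finset.Icc 1 (lam.get i)).image (hkl lam m i) with hB
  have hinjA : Set.InjOn (fun k => ell lam m i - ell lam m k) (Finset.Ioc i m) := by
    intro k hk k' hk' h
    simp only [Finset.coe_Ioc, Set.mem_Ioc] at hk hk'
    have h' : ell lam m i - ell lam m k = ell lam m i - ell lam m k' := h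
    have h3 := ell_lt lam hk.1 hk.2
    have h4 := ell_lt lam hk'.1 hk'.2
    by_contra hne
    rcases Nat.lt_or_ge k k' with h1 | h1
    · have h2 := ell_lt lam h1 hk'.2
      omega
    · rcases Nat.lt_or_ge k' k with h1' | h1'
      · have h2 := ell_lt lam h1' hk.2
        omega
      · omega
  have hinjB : Set.InjOn (hkl lam m i) (Finset.Icc 1 (lam.get i)) := by
    intro j hj j' hj' h
    simp only [Finset.coe_Icc, Set.mem_Icc] at hj hj'
    by_contra hne
    have key : ∀ a b : ℕ, 1 ≤ a → a < b → b ≤ lam.get i →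
        hkl lam m i b < hkl lam m i a := by
      intro a b ha hab hb
      have := aLen_anti lam (m := m) (i := i) (le_of_lt hab)
      unfold hkl
      omega
    rcases Nat.lt_or_ge j j' with h1 | h1
    · have := key j j' hj.1 h1 hj'.2; omega
    · rcases Nat.lt_or_ge j' j with h1' | h1'
      · have := key j' j hj'.1 h1' hj.2; omega
      · omega
  have hAsub : A ⊆ Finset.Icc 1 (ell lam m i) := by
    intro x hx
    simp only [hA, Finset.mem_image, Finset.mem_Ioc] at hx
    obtain ⟨k, ⟨hk1, hk2⟩, rfl⟩ := hx
    have := ell_lt lam hk1 hk2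
    simp only [Finset.mem_Icc]
    omega
  have hBsub : B ⊆ Finset.Icc 1 (ell lam m i) := by
    intro x hx
    simp only [hB, Finset.mem_image, Finset.mem_Icc] at hx
    obtain ⟨j, ⟨hj1, hj2⟩, rfl⟩ := hx
    have h1 := aLen_le lam (m := m) (i := i) (j := j)
    simp only [Finset.mem_Icc]
    unfold hkl ell
    omega
  have hdisj : Disjoint A B := by
    simp only [Finset.disjoint_left, hA, hB, Finset.mem_image, Finset.mem_Ioc,
      Finset.mem_Icc]
    rintro x ⟨k, ⟨hk1, hk2⟩, rfl⟩ ⟨j, ⟨hj1, hj2⟩, heq⟩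
    have hgk : lam.get k ≤ lam.get i := get_anti lam (le_of_lt hk1)
    rcases Nat.lt_or_ge (lam.get k) j with hc | hc
    · -- aLen ≤ k - 1 - i
      have hsub : (Finset.Ioc i m).filter (fun k' => j ≤ lam.get k') ⊆
          Finset.Ioc i (k - 1) := by
        intro k' hk'
        simp only [Finset.mem_filter, Finset.mem_Ioc] at hk' ⊢
        refine ⟨hk'.1.1, ?_⟩
        by_contra hcon
        have : lam.get k' ≤ lam.get k := get_anti lam (by omega)
        omega
      have hcard := Finset.card_le_card hsub
      rw [Nat.card_Ioc] at hcard
      have := aLen_le lam (m := m) (i := i) (j := j)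
      unfold hkl ell aLen at heq
      omega
    · -- aLen ≥ k - i
      have hsub : Finset.Ioc i k ⊆ (Finset.Ioc i m).filter (fun k' => j ≤ lam.get k') := by
        intro k' hk'
        simp only [Finset.mem_filter, Finset.mem_Ioc] at hk' ⊢
        have : lam.get k ≤ lam.get k' := get_anti lam hk'.2
        omega
      have hcard := Finset.card_le_card hsub
      rw [Nat.card_Ioc] at hcard
      unfold hkl ell aLen at heq
      omega
  have hcardA : A.card = m - i := by
    rw [hA, Finset.card_image_of_injOn hinjA, Nat.card_Ioc]
  have hcardB : B.card = lam.get i := by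
    rw [hB, Finset.card_image_of_injOn hinjB, Nat.card_Icc]
    omega
  have hunion : A ∪ B = Finset.Icc 1 (ell lam m i) := by
    apply Finset.eq_of_subset_of_card_le (Finset.union_subset hAsub hBsub)
    rw [Finset.card_union_of_disjoint hdisj, hcardA, hcardB, Nat.card_Icc]
    unfold ell
    omega
  have hfact : ∏ x ∈ Finset.Icc 1 (ell lam m i), x = Nat.factorial (ell lam m i) := by
    rw [← Finset.Ico_add_one_right_eq_Icc, Finset.prod_Ico_id_eq_factorial]
  rw [← hfact, ← hunion, Finset.prod_union hdisj]
  rw [hA, hB, Finset.prod_image hinjA, Finset.prod_image hinjB]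
  ring

/-- The Vandermonde-type product, in `ℕ`. -/
def Dn (lam : YPartition) (m : ℕ) : ℕ :=
  ∏ i ∈ Finset.Icc 1 m, ∏ k ∈ Finset.Ioc i m, (ell lam m i - ell lam m k)

theorem prod_hook {m : ℕ} (hb : Bnd lam m) :
    (∏ c ∈ cellsF lam m, hookLength lam c) * Dn lam m =
      ∏ i ∈ Finset.Icc 1 m, Nat.factorial (ell lam m i) := by
  have h1 : ∏ c ∈ cellsF lam m, hookLength lam c =
      ∏ i ∈ Finset.Icc 1 m, ∏ j ∈ Finset.Icc 1 (lam.get i), hkl lam m i j := by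
    rw [cellsF, Finset.prod_biUnion]
    · refine Finset.prod_congr rfl fun i hi => ?_
      rw [Finset.singleton_product, Finset.prod_map]
      refine Finset.prod_congr rfl fun j hj => ?_
      simp only [Finset.mem_Icc] at hi hj
      exact hookLength_eq lam hb hi.1 hj.1 hj.2
    · intro i _ j _ hij
      simp only [Finset.disjoint_left, Finset.mem_product, Finset.mem_singleton]
      rintro ⟨a, b⟩ ⟨rfl, -⟩ ⟨rfl, -⟩
      exact hij rfl
  rw [h1, Dn, ← Finset.prod_mul_distrib]
  refine Finset.prod_congr rfl fun i hi => ?_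
  simp only [Finset.mem_Icc] at hi
  exact row_prod lam hi.1 hi.2

end HLF
namespace HLF

open Polynomial Finset

/-- Second coefficient of `∏ (X - C (u j))`. -/
theorem coeff_sub_two (s : Finset ℕ) (u : ℕ → ℚ) (hs : 2 ≤ s.card) :
    (∏ j ∈ s, (X - C (u j))).coeff (s.card - 2) =
      ((∑ j ∈ s, u j) ^ 2 - ∑ j ∈ s, u j ^ 2) / 2 := by
  induction s using Finset.cons_induction with
  | empty => simp at hs
  | cons a t hat ih =>
    rw [Finset.prod_cons, Finset.sum_cons, Finset.sum_cons]
    rw [Finset.card_cons] at hs ⊢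
    have ht1 : 1 ≤ t.card := by omega
    rcases Nat.lt_or_ge t.card 2 with ht2 | ht2
    · -- t.card = 1
      have : t.card = 1 := by omega
      obtain ⟨b, rfl⟩ := Finset.card_eq_one.mp this
      simp only [Finset.prod_singleton, Finset.sum_singleton, Finset.card_singleton]
      rw [(by rfl : (1 + 1 - 2 : ℕ) = 0), Polynomial.mul_coeff_zero]
      simp only [Polynomial.coeff_sub, Polynomial.coeff_X_zero, Polynomial.coeff_C_zero,
        zero_sub]
      ring
    · have hcoeff1 : (∏ j ∈ t, (X - C (u j))).coeff (t.card - 1) = -∑ j ∈ t, u j :=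
        Polynomial.prod_X_sub_C_coeff_card_pred t u (by omega)
      have hk : t.card + 1 - 2 = (t.card - 2) + 1 := by omega
      rw [hk, sub_mul, Polynomial.coeff_sub, Polynomial.coeff_X_mul, Polynomial.coeff_C_mul]
      have hk2 : (t.card - 2) + 1 = t.card - 1 := by omega
      rw [hk2, ih ht2, hcoeff1]
      ring

theorem prod_ne_zero_of_injOn {s : Finset ℕ} {v : ℕ → ℚ} (hv : Set.InjOn v s)
    {r : ℕ} (hr : r ∈ s) : ∏ j ∈ s.erase r, (v r - v j) ≠ 0 := by
  rw [Finset.prod_ne_zero_iff]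
  intro j hj
  rw [Finset.mem_erase] at hj
  have : v r ≠ v j := fun h => hj.1 (hv hj.2 hr h.symm)
  exact sub_ne_zero_of_ne this

/-- The Lagrange-interpolation identity at the heart of the hook recursion. -/
theorem lagrange_id (s : Finset ℕ) (v : ℕ → ℚ) (hv : Set.InjOn v s) (hs : s.Nonempty) :
    ∑ r ∈ s, v r * (∏ j ∈ s.erase r, (v r - 1 - v j)) *
        (∏ j ∈ s.erase r, (v r - v j))⁻¹ =
      (∑ j ∈ s, v j) - (s.card : ℚ) * ((s.card : ℚ) - 1) / 2 := by
  rcases Nat.lt_or_ge s.card 2 with hm1 | hm2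
  · -- singleton case
    have : s.card = 1 := by
      have := Finset.card_pos.mpr hs; omega
    obtain ⟨r, rfl⟩ := Finset.card_eq_one.mp this
    simp [Finset.erase_singleton]
  set m := s.card with hm
  set f : ℚ[X] := ∏ j ∈ s, (X - C (v j)) with hf
  set g : ℚ[X] := ∏ j ∈ s, (X - C (v j + 1)) with hg
  set p : ℚ[X] := X * g - (X - C (m : ℚ)) * f with hp
  have hfmonic : f.Monic := monic_prod_of_monic _ _ fun j _ => monic_X_sub_C _
  have hgmonic : g.Monic := monic_prod_of_monic _ _ fun j _ => monic_X_sub_C _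
  have hfdeg : f.natDegree = m := by
    rw [hf, Polynomial.natDegree_prod_of_monic _ _ fun j _ => monic_X_sub_C _,
      Finset.sum_congr rfl fun j _ => Polynomial.natDegree_X_sub_C (v j),
      Finset.sum_const, smul_eq_mul, mul_one]
  have hgdeg : g.natDegree = m := by
    rw [hg, Polynomial.natDegree_prod_of_monic _ _ fun j _ => monic_X_sub_C _,
      Finset.sum_congr rfl fun j _ => Polynomial.natDegree_X_sub_C (v j + 1),
      Finset.sum_const, smul_eq_mul, mul_one]
  have hfm : f.coeff m = 1 := by
    have := hfmonic.coeff_natDegree; rwa [hfdeg] at this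
  have hgm : g.coeff m = 1 := by
    have := hgmonic.coeff_natDegree; rwa [hgdeg] at this
  have hfm1 : f.coeff (m - 1) = -∑ j ∈ s, v j :=
    Polynomial.prod_X_sub_C_coeff_card_pred s v (by omega)
  have hgm1 : g.coeff (m - 1) = -(∑ j ∈ s, v j) - m := by
    have := Polynomial.prod_X_sub_C_coeff_card_pred s (fun j => v j + 1) (by omega)
    rw [Finset.sum_add_distrib, Finset.sum_const, Nat.smul_one_eq_cast] at this
    rw [hg]
    rw [this]
    push_cast
    ring
  have hfm2 : f.coeff (m - 2) = ((∑ j ∈ s, v j) ^ 2 - ∑ j ∈ s, v j ^ 2) / 2 :=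
    coeff_sub_two s v hm2
  have hgm2 : g.coeff (m - 2) =
      ((∑ j ∈ s, v j + m) ^ 2 - (∑ j ∈ s, v j ^ 2 + 2 * ∑ j ∈ s, v j + m)) / 2 := by
    have h1 := coeff_sub_two s (fun j => v j + 1) hm2
    have h2 : ∑ j ∈ s, (v j + 1) = ∑ j ∈ s, v j + m := by
      rw [Finset.sum_add_distrib, Finset.sum_const, Nat.smul_one_eq_cast]
    have h3 : ∑ j ∈ s, (v j + 1) ^ 2 = ∑ j ∈ s, v j ^ 2 + 2 * ∑ j ∈ s, v j + m := by
      have : ∀ j ∈ s, (v j + 1) ^ 2 = v j ^ 2 + 2 * v j + 1 := fun j _ => by ring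
      rw [Finset.sum_congr rfl this, Finset.sum_add_distrib, Finset.sum_add_distrib,
        Finset.sum_const, Nat.smul_one_eq_cast, ← Finset.mul_sum]
      all_goals ring
    rw [hg, h1]
    rw [h2, h3]
  -- coefficients of p
  have hcoeffp : ∀ k : ℕ, 1 ≤ k →
      p.coeff k = g.coeff (k - 1) - (f.coeff (k - 1) - (m : ℚ) * f.coeff k) := by
    intro k hk
    obtain ⟨k', rfl⟩ : ∃ k', k = k' + 1 := ⟨k - 1, by omega⟩
    simp only [hp, sub_mul, Polynomial.coeff_sub, Polynomial.coeff_X_mul,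
      Polynomial.coeff_C_mul, Nat.add_sub_cancel]
  have hdeg : p.degree < (m : ℕ) := by
    rw [Polynomial.degree_lt_iff_coeff_zero]
    intro k hk
    have hk' : (m : ℕ) ≤ k := by exact_mod_cast hk
    have h1 : 1 ≤ k := by omega
    rw [hcoeffp k h1]
    rcases Nat.lt_or_ge (m + 1) k with h2 | h2
    · have e1 : g.coeff (k - 1) = 0 :=
        Polynomial.coeff_eq_zero_of_natDegree_lt (by omega)
      have e2 : f.coeff (k - 1) = 0 :=
        Polynomial.coeff_eq_zero_of_natDegree_lt (by omega)
      have e3 : f.coeff k = 0 :=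
        Polynomial.coeff_eq_zero_of_natDegree_lt (by omega)
      rw [e1, e2, e3]; ring
    · rcases Nat.lt_or_ge k (m + 1) with h3 | h3
      · -- k = m
        have hkm : k = m := by omega
        subst hkm
        rw [hgm1, hfm1, hfm]
        ring
      · -- k = m + 1
        have hkm : k = m + 1 := by omega
        subst hkm
        have : m + 1 - 1 = m := by omega
        rw [this, hgm, hfm, Polynomial.coeff_eq_zero_of_natDegree_lt (by omega : f.natDegree < m + 1)]
        ring
  have hpm1 : p.coeff (m - 1) = (m : ℚ) * ((m : ℚ) - 1) / 2 - ∑ j ∈ s, v j := by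
    rw [hcoeffp (m - 1) (by omega)]
    have : m - 1 - 1 = m - 2 := by omega
    rw [this, hgm2, hfm2, hfm1]
    ring
  -- Lagrange interpolation
  have hinterp := Lagrange.eq_interpolate (f := p) hv (by rwa [← hm])
  have hbasis : ∀ r ∈ s, (Lagrange.basis s v r).coeff (m - 1) =
      (∏ j ∈ s.erase r, (v r - v j))⁻¹ := by
    intro r hr
    have hb : Lagrange.basis s v r =
        C (∏ j ∈ s.erase r, (v r - v j)⁻¹) * ∏ j ∈ s.erase r, (X - C (v j)) := by
      rw [Lagrange.basis]
      rw [map_prod, ← Finset.prod_mul_distrib]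
      exact Finset.prod_congr rfl fun j _ => rfl
    have hmono : (∏ j ∈ s.erase r, (X - C (v j))).Monic :=
      monic_prod_of_monic _ _ fun j _ => monic_X_sub_C _
    have hdeg2 : (∏ j ∈ s.erase r, (X - C (v j))).natDegree = m - 1 := by
      rw [Polynomial.natDegree_prod_of_monic _ _ fun j _ => monic_X_sub_C _]
      simp [Polynomial.natDegree_X_sub_C, Finset.card_erase_of_mem hr]
      rw [hm]
    rw [hb, Polynomial.coeff_C_mul, ← hdeg2, hmono.coeff_natDegree, mul_one,
      ← Finset.prod_inv_distrib]
  have heval : ∀ r ∈ s, p.eval (v r) = v r * (-1) * ∏ j ∈ s.erase r, (v r - 1 - v j) := by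
    intro r hr
    have hfz : f.eval (v r) = 0 := by
      rw [hf, Polynomial.eval_prod]
      exact Finset.prod_eq_zero hr (by simp)
    have hgz : g.eval (v r) = (-1) * ∏ j ∈ s.erase r, (v r - 1 - v j) := by
      rw [hg, Polynomial.eval_prod, ← Finset.mul_prod_erase _ _ hr]
      simp only [Polynomial.eval_sub, Polynomial.eval_X, Polynomial.eval_C]
      have : v r - (v r + 1) = -1 := by ring
      rw [this]
      congr 1
      exact Finset.prod_congr rfl fun j _ => by ring
    rw [hp]
    simp only [Polynomial.eval_sub, Polynomial.eval_mul, Polynomial.eval_X,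
      Polynomial.eval_C, hfz, hgz]
    ring
  -- take coefficient m-1 in the interpolation identity
  have hcoeq : p.coeff (m - 1) =
      ∑ r ∈ s, p.eval (v r) * (∏ j ∈ s.erase r, (v r - v j))⁻¹ := by
    conv_lhs => rw [hinterp]
    rw [Lagrange.interpolate_apply, Polynomial.finset_sum_coeff]
    refine Finset.sum_congr rfl fun r hr => ?_
    rw [Polynomial.coeff_C_mul, hbasis r hr]
  rw [hpm1] at hcoeq
  have : ∑ r ∈ s, p.eval (v r) * (∏ j ∈ s.erase r, (v r - v j))⁻¹ =
      -∑ r ∈ s, v r * (∏ j ∈ s.erase r, (v r - 1 - v j)) *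
        (∏ j ∈ s.erase r, (v r - v j))⁻¹ := by
    rw [← Finset.sum_neg_distrib]
    refine Finset.sum_congr rfl fun r hr => ?_
    rw [heval r hr]
    ring
  rw [this] at hcoeq
  have := hcoeq.symm
  linarith [this]

end HLF
namespace HLF

open Finset

/-- The ℚ-Vandermonde product. -/
def DQ (x : ℕ → ℚ) (m : ℕ) : ℚ :=
  ∏ i ∈ Finset.Icc 1 m, ∏ k ∈ Finset.Ioc i m, (x i - x k)

/-- The pairs finset. -/
def pairsF (m : ℕ) : Finset (ℕ × ℕ) :=
  (Finset.Icc 1 m).biUnion fun i => {i} ×ˢ Finset.Ioc i m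

theorem mem_pairsF {m : ℕ} {p : ℕ × ℕ} :
    p ∈ pairsF m ↔ 1 ≤ p.1 ∧ p.1 < p.2 ∧ p.2 ≤ m := by
  simp only [pairsF, Finset.mem_biUnion, Finset.mem_product, Finset.mem_singleton,
    Finset.mem_Icc, Finset.mem_Ioc]
  constructor
  · rintro ⟨i, ⟨hi1, him⟩, h1, h2, h3⟩
    subst h1; exact ⟨hi1, h2, h3⟩
  · rintro ⟨h1, h2, h3⟩
    exact ⟨p.1, ⟨h1, by omega⟩, rfl, h2, h3⟩

theorem DQ_eq_pairs (x : ℕ → ℚ) (m : ℕ) :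
    DQ x m = ∏ p ∈ pairsF m, (x p.1 - x p.2) := by
  rw [DQ, pairsF, Finset.prod_biUnion]
  · refine Finset.prod_congr rfl fun i _ => ?_
    rw [Finset.singleton_product, Finset.prod_map]
    rfl
  · intro i _ j _ hij
    simp only [Finset.disjoint_left, Finset.mem_product, Finset.mem_singleton]
    rintro ⟨a, b⟩ ⟨rfl, -⟩ ⟨rfl, -⟩
    exact hij rfl

theorem prod_pairs_r {m r : ℕ} (hr1 : 1 ≤ r) (hrm : r ≤ m) (y : ℕ → ℚ) :
    ∏ p ∈ (pairsF m).filter (fun p => p.1 = r ∨ p.2 = r), (y p.1 - y p.2) =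
      ∏ j ∈ (Finset.Icc 1 m).erase r, (if j < r then y j - y r else y r - y j) := by
  apply Finset.prod_nbij' (fun p : ℕ × ℕ => p.1 + p.2 - r)
    (fun j => if j < r then (j, r) else (r, j))
  · rintro ⟨a, b⟩ hp
    rw [Finset.mem_filter, mem_pairsF] at hp
    obtain ⟨⟨h1, h2, h3⟩, h4 | h4⟩ := hp <;>
      · simp only at h4
        subst h4
        simp only [Finset.mem_erase, Finset.mem_Icc]
        omega
  · intro j hj
    rw [Finset.mem_erase, Finset.mem_Icc] at hj
    by_cases h : j < r
    · rw [if_pos h, Finset.mem_filter, mem_pairsF]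
      exact ⟨⟨by omega, by omega, by omega⟩, Or.inr rfl⟩
    · rw [if_neg h, Finset.mem_filter, mem_pairsF]
      exact ⟨⟨by omega, by omega, by omega⟩, Or.inl rfl⟩
  · rintro ⟨a, b⟩ hp
    rw [Finset.mem_filter, mem_pairsF] at hp
    obtain ⟨⟨h1, h2, h3⟩, h4 | h4⟩ := hp <;> simp only at h4 <;> subst h4
    · have e : a + b - a = b := by omega
      simp only [e]
      rw [if_neg (by omega)]
    · have e : a + b - b = a := by omega
      simp only [e]
      rw [if_pos (by omega)]
  · intro j hj
    rw [Finset.mem_erase, Finset.mem_Icc] at hj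
    by_cases h : j < r
    · rw [if_pos h]
      simp only
      omega
    · rw [if_neg h]
      simp only
      omega
  · rintro ⟨a, b⟩ hp
    rw [Finset.mem_filter, mem_pairsF] at hp
    obtain ⟨⟨h1, h2, h3⟩, h4 | h4⟩ := hp <;> simp only at h4 ⊢ <;> subst h4
    · have e : a + b - a = b := by omega
      rw [e, if_neg (by omega)]
    · have e : a + b - b = a := by omega
      rw [e, if_pos (by omega)]

/-- The decremented sequence. -/
def decSeq (x : ℕ → ℚ) (r : ℕ) : ℕ → ℚ := fun j => if j = r then x j - 1 else x j

theorem DQ_dec {m r : ℕ} (hr1 : 1 ≤ r) (hrm : r ≤ m) (x : ℕ → ℚ) :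
    DQ (decSeq x r) m * ∏ j ∈ (Finset.Icc 1 m).erase r, (x r - x j) =
      DQ x m * ∏ j ∈ (Finset.Icc 1 m).erase r, (x r - 1 - x j) := by
  have hsplit : ∀ y : ℕ → ℚ, ∏ p ∈ pairsF m, (y p.1 - y p.2) =
      (∏ p ∈ (pairsF m).filter (fun p => p.1 = r ∨ p.2 = r), (y p.1 - y p.2)) *
        ∏ p ∈ (pairsF m).filter (fun p => ¬(p.1 = r ∨ p.2 = r)), (y p.1 - y p.2) :=
    fun y => (Finset.prod_filter_mul_prod_filter_not _ _ _).symm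
  have hsame : ∏ p ∈ (pairsF m).filter (fun p => ¬(p.1 = r ∨ p.2 = r)),
      (decSeq x r p.1 - decSeq x r p.2) =
      ∏ p ∈ (pairsF m).filter (fun p => ¬(p.1 = r ∨ p.2 = r)), (x p.1 - x p.2) := by
    refine Finset.prod_congr rfl fun p hp => ?_
    rw [Finset.mem_filter] at hp
    push_neg at hp
    rw [decSeq, decSeq, if_neg hp.2.1, if_neg hp.2.2]
  rw [DQ_eq_pairs, DQ_eq_pairs, hsplit (decSeq x r), hsplit x, hsame,
    prod_pairs_r hr1 hrm, prod_pairs_r hr1 hrm]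
  have key : (∏ j ∈ (Finset.Icc 1 m).erase r,
        (if j < r then decSeq x r j - decSeq x r r else decSeq x r r - decSeq x r j)) *
        (∏ j ∈ (Finset.Icc 1 m).erase r, (x r - x j)) =
      (∏ j ∈ (Finset.Icc 1 m).erase r, (if j < r then x j - x r else x r - x j)) *
        ∏ j ∈ (Finset.Icc 1 m).erase r, (x r - 1 - x j) := by
    rw [← Finset.prod_mul_distrib, ← Finset.prod_mul_distrib]
    refine Finset.prod_congr rfl fun j hj => ?_
    rw [Finset.mem_erase, Finset.mem_Icc] at hj
    have e1 : decSeq x r j = x j := by rw [decSeq, if_neg (by omega : ¬ j = r)]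
    have e2 : decSeq x r r = x r - 1 := by rw [decSeq, if_pos rfl]
    by_cases h : j < r
    · rw [if_pos h, if_pos h, e1, e2]
      ring
    · rw [if_neg h, if_neg h, e1, e2]
      ring
  linear_combination (∏ p ∈ (pairsF m).filter (fun p => ¬(p.1 = r ∨ p.2 = r)),
    (x p.1 - x p.2)) * key

/-- The key recursion identity. -/
theorem vandermonde_rec {m : ℕ} (x : ℕ → ℚ) (hm : 1 ≤ m)
    (hinj : Set.InjOn x (Finset.Icc 1 m)) :
    ∑ r ∈ Finset.Icc 1 m, x r * DQ (decSeq x r) m =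
      ((∑ i ∈ Finset.Icc 1 m, x i) - (m : ℚ) * ((m : ℚ) - 1) / 2) * DQ x m := by
  have hterm : ∀ r ∈ Finset.Icc 1 m, x r * DQ (decSeq x r) m =
      DQ x m * (x r * (∏ j ∈ (Finset.Icc 1 m).erase r, (x r - 1 - x j)) *
        (∏ j ∈ (Finset.Icc 1 m).erase r, (x r - x j))⁻¹) := by
    intro r hr
    rw [Finset.mem_Icc] at hr
    have hne := prod_ne_zero_of_injOn hinj (Finset.mem_Icc.mpr hr)
    have := DQ_dec hr.1 hr.2 x
    field_simp
    linear_combination x r * this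
  rw [Finset.sum_congr rfl hterm, ← Finset.mul_sum,
    lagrange_id _ x hinj ⟨1, Finset.mem_Icc.mpr ⟨le_refl 1, hm⟩⟩, Nat.card_Icc]
  have : ((m + 1 - 1 : ℕ) : ℚ) = (m : ℚ) := by push_cast; ring
  rw [this]
  ring

end HLF
namespace HLF

open Finset

theorem skew_empty (lam : YPartition) : skewCells lam YPartition.empty = cells lam := rfl

theorem SYT_finite (lam : YPartition) : (SYT lam YPartition.empty).Finite := by
  classical
  obtain ⟨m, hm⟩ := exists_bnd lam
  set F := cellsF lam m with hF
  have hcoe : (F : Set (ℕ × ℕ)) = cells lam := coe_cellsF lam hm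
  set n := (skewCells lam YPartition.empty).ncard with hn
  apply Set.Finite.of_finite_image (f := fun T : ℕ × ℕ → ℕ => (fun c : F => T c.1))
  · apply Set.Finite.subset (Set.Finite.pi (fun c : F => Set.finite_Icc 0 n))
    rintro g ⟨T, hT, rfl⟩
    intro c _
    have hc : (c : ℕ × ℕ) ∈ cells lam := by rw [← hcoe]; exact c.2
    have := hT.2.1.1 (skew_empty lam ▸ hc)
    simp only [Set.mem_Icc] at this ⊢
    omega
  · intro T hT T' hT' h
    funext c
    by_cases hc : c ∈ cells lam
    · have hcF : c ∈ F := by rw [← Finset.mem_coe, hcoe]; exact hc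
      exact congrFun h ⟨c, hcF⟩
    · rw [hT.1 c (fun hcc => hc (skew_empty lam ▸ hcc)),
        hT'.1 c (fun hcc => hc (skew_empty lam ▸ hcc))]

theorem SYT_zero (lam : YPartition) (h0 : (cells lam).ncard = 0) :
    SYT lam YPartition.empty = {fun _ => 0} := by
  have hfin := cells_finite lam
  have hempty : cells lam = ∅ := (Set.ncard_eq_zero hfin).mp h0
  ext T
  simp only [Set.mem_singleton_iff]
  constructor
  · intro hT
    funext c
    exact hT.1 c (by rw [skew_empty, hempty]; exact Set.notMem_empty c)
  · rintro rfl
    refine ⟨fun c _ => rfl, ?_, ?_, ?_⟩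
    · rw [skew_empty, hempty]
      have h1 : Set.Icc 1 ((∅ : Set (ℕ × ℕ)).ncard) = (∅ : Set ℕ) := by
        rw [Set.ncard_empty]
        ext x; simp only [Set.mem_Icc, Set.mem_empty_iff_false, iff_false]; omega
      rw [h1]
      exact ⟨fun c hc => hc.elim, fun c hc => hc.elim, fun y hy => hy.elim⟩
    · intro i j h1 _
      rw [skew_empty, hempty] at h1
      exact h1.elim
    · intro i j h1 _
      rw [skew_empty, hempty] at h1
      exact h1.elim

/-- counting disjoint unions -/
theorem ncard_biUnion {ι α : Type*} (s : Finset ι) (f : ι → Set α)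
    (hfin : ∀ i ∈ s, (f i).Finite)
    (hdisj : ∀ i ∈ s, ∀ j ∈ s, i ≠ j → Disjoint (f i) (f j)) :
    (⋃ i ∈ s, f i).ncard = ∑ i ∈ s, (f i).ncard := by
  classical
  induction s using Finset.induction with
  | empty => simp
  | @insert a t hat ih =>
    rw [Finset.sum_insert hat]
    have hcup : ⋃ i ∈ insert a t, f i = f a ∪ ⋃ i ∈ t, f i := by
      simp [Set.biUnion_insert]
    rw [hcup]
    have hfint : (⋃ i ∈ t, f i).Finite := by
      apply Set.Finite.biUnion t.finite_toSet
      intro i hi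
      exact hfin i (Finset.mem_insert_of_mem hi)
    have hdisj2 : Disjoint (f a) (⋃ i ∈ t, f i) := by
      rw [Set.disjoint_iff_inter_eq_empty]
      ext x
      simp only [Set.mem_inter_iff, Set.mem_iUnion, Set.mem_empty_iff_false, iff_false,
        not_and, not_exists]
      intro hxa i hi
      have := hdisj a (Finset.mem_insert_self a t) i (Finset.mem_insert_of_mem hi)
        (fun h => hat (h ▸ hi))
      exact fun hxi => (Set.disjoint_left.mp this hxa) hxi
    rw [Set.ncard_union_eq hdisj2 (hfin a (Finset.mem_insert_self a t)) hfint]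
    rw [ih (fun i hi => hfin i (Finset.mem_insert_of_mem hi))
      (fun i hi j hj hij => hdisj i (Finset.mem_insert_of_mem hi) j
        (Finset.mem_insert_of_mem hj) hij)]

end HLF
namespace HLF

open Finset

/-- Remove the corner in row `r`. -/
def dec (lam : YPartition) (r : ℕ) : YPartition where
  f := fun k => if k = r - 1 then max (lam.get r - 1) (lam.get (r + 1)) else lam.f k
  antitone' := by
    intro i j hij
    have haux : ∀ a b : ℕ, a ≤ b → lam.f b ≤ lam.f a := fun a b h => lam.antitone' h
    have h1 : lam.get (r + 1) = lam.f r := rfl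
    have h2 : lam.get r = lam.f (r - 1) := rfl
    by_cases hi : i = r - 1 <;> by_cases hj : j = r - 1 <;>
      simp only [hi, hj, if_pos, if_neg, if_true, if_false, le_refl]
    · have h3 : r ≤ j ∨ j = r - 1 := by omega
      have h4 := haux r j
      have h5 := haux j j
      rcases h3 with h3 | h3
      · have := haux r j h3
        omega
      · omega
    · have := haux i (r - 1) (by omega)
      have := haux (r - 1) r (by omega)
      omega
    · exact haux i j hij
  eventually_zero' := by
    obtain ⟨N, hN⟩ := lam.eventually_zero'
    refine ⟨max N r + 1, fun i hi => ?_⟩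
    have hi1 : i ≠ r - 1 := by omega
    simp only [if_neg hi1]
    exact hN i (by omega)

theorem get_dec {lam : YPartition} {r : ℕ} (hr : 1 ≤ r) {i : ℕ} (hi : 1 ≤ i) :
    (dec lam r).get i =
      if i = r then max (lam.get r - 1) (lam.get (r + 1)) else lam.get i := by
  have he : (dec lam r).get i =
      if i - 1 = r - 1 then max (lam.get r - 1) (lam.get (r + 1)) else lam.f (i - 1) := rfl
  rw [he]
  by_cases h : i = r
  · rw [if_pos (by omega), if_pos h]
  · rw [if_neg (by omega), if_neg h]
    rfl

theorem get_dec_corner {lam : YPartition} {r : ℕ} (hr : 1 ≤ r)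
    (hc : lam.get (r + 1) < lam.get r) {i : ℕ} (hi : 1 ≤ i) :
    (dec lam r).get i = if i = r then lam.get r - 1 else lam.get i := by
  rw [get_dec hr hi]
  by_cases h : i = r
  · rw [if_pos h, if_pos h, Nat.max_eq_left (by omega)]
  · rw [if_neg h, if_neg h]

theorem bnd_dec {lam : YPartition} {m r : ℕ} (hb : Bnd lam m) (hr : 1 ≤ r) (hrm : r ≤ m)
    (hc : lam.get (r + 1) < lam.get r) : Bnd (dec lam r) m := by
  intro i hi
  rw [get_dec_corner hr hc (by omega), if_neg (by omega)]
  exact hb i hi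

theorem cells_dec {lam : YPartition} {r : ℕ} (hr : 1 ≤ r)
    (hc : lam.get (r + 1) < lam.get r) :
    cells (dec lam r) = cells lam \ {(r, lam.get r)} := by
  ext ⟨i, j⟩
  simp only [mem_cells, Set.mem_diff, Set.mem_singleton_iff, Prod.mk.injEq]
  constructor
  · rintro ⟨h1, h2, h3⟩
    rw [get_dec_corner hr hc h1] at h3
    by_cases h : i = r
    · rw [if_pos h] at h3
      subst h
      exact ⟨⟨h1, h2, by omega⟩, by omega⟩
    · rw [if_neg h] at h3
      exact ⟨⟨h1, h2, h3⟩, fun hh => h hh.1⟩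
  · rintro ⟨⟨h1, h2, h3⟩, h4⟩
    refine ⟨h1, h2, ?_⟩
    rw [get_dec_corner hr hc h1]
    by_cases h : i = r
    · rw [if_pos h]
      rw [h] at h3
      have h5 : ¬ j = lam.get r := fun hh => h4 ⟨h, hh⟩
      omega
    · rw [if_neg h]
      exact h3

theorem corner_mem_cells {lam : YPartition} {r : ℕ} (hr : 1 ≤ r)
    (hc : lam.get (r + 1) < lam.get r) : (r, lam.get r) ∈ cells lam := by
  rw [mem_cells]
  exact ⟨hr, by omega, le_refl _⟩

theorem ncard_cells_dec {lam : YPartition} {r : ℕ} (hr : 1 ≤ r)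
    (hc : lam.get (r + 1) < lam.get r) :
    (cells (dec lam r)).ncard = (cells lam).ncard - 1 := by
  rw [cells_dec hr hc]
  exact Set.ncard_diff_singleton_of_mem (corner_mem_cells hr hc)

end HLF
namespace HLF

open Finset

/-- The corner rows. -/
def corners (lam : YPartition) (m : ℕ) : Finset ℕ :=
  (Finset.Icc 1 m).filter fun r => lam.get (r + 1) < lam.get r

theorem mem_corners {lam : YPartition} {m r : ℕ} :
    r ∈ corners lam m ↔ 1 ≤ r ∧ r ≤ m ∧ lam.get (r + 1) < lam.get r := by
  simp only [corners, Finset.mem_filter, Finset.mem_Icc]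
  tauto

/-- Insert the value `n` at the corner of row `r`. -/
def up (lam : YPartition) (n r : ℕ) (S : ℕ × ℕ → ℕ) : ℕ × ℕ → ℕ :=
  fun c => if c = (r, lam.get r) then n else S c

section Branch

variable {lam : YPartition} {m r : ℕ}

theorem up_mem (hr : r ∈ corners lam m) {S : ℕ × ℕ → ℕ}
    (hS : S ∈ SYT (dec lam r) YPartition.empty) :
    up lam ((cells lam).ncard) r S ∈ SYT lam YPartition.empty := by
  obtain ⟨hr1, hrm, hcr⟩ := mem_corners.mp hr
  set n := (cells lam).ncard with hn
  set pt : ℕ × ℕ := (r, lam.get r) with hpt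
  have hptmem : pt ∈ cells lam := corner_mem_cells hr1 hcr
  have hcells : cells (dec lam r) = cells lam \ {pt} := cells_dec hr1 hcr
  have hnd : (cells (dec lam r)).ncard = n - 1 := ncard_cells_dec hr1 hcr
  have hn1 : 1 ≤ n := (Set.ncard_pos (cells_finite lam)).mpr ⟨pt, hptmem⟩
  obtain ⟨hS0, hSbij, hSrow, hScol⟩ := hS
  rw [skew_empty, hnd] at hSbij
  have hub : ∀ c : ℕ × ℕ, c ≠ pt → up lam n r S c = S c := fun c hc => if_neg hc
  have hup : up lam n r S pt = n := if_pos rfl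
  have hSle : ∀ c ∈ cells (dec lam r), S c ∈ Set.Icc 1 (n - 1) := fun c hc => hSbij.1 hc
  refine ⟨?_, ?_, ?_, ?_⟩
  · -- vanishing
    intro c hc
    rw [skew_empty] at hc
    have hcne : c ≠ pt := fun h => hc (h ▸ hptmem)
    rw [hub c hcne]
    apply hS0
    rw [skew_empty, hcells]
    exact fun hcd => hc hcd.1
  · -- bijection
    rw [skew_empty]
    show Set.BijOn (up lam n r S) (cells lam) (Set.Icc 1 n)
    refine ⟨?_, ?_, ?_⟩
    · intro c hc
      by_cases hc' : c = pt
      · rw [hc', hup]; exact ⟨hn1, le_rfl⟩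
      · rw [hub c hc']
        have := hSle c (by rw [hcells]; exact ⟨hc, hc'⟩)
        rw [Set.mem_Icc] at this ⊢
        omega
    · intro c hc c' hc' heq
      by_cases h1 : c = pt <;> by_cases h2 : c' = pt
      · rw [h1, h2]
      · rw [h1, hup, hub c' h2] at heq
        have := hSle c' (by rw [hcells]; exact ⟨hc', h2⟩)
        rw [Set.mem_Icc] at this
        omega
      · rw [h2, hup, hub c h1] at heq
        have := hSle c (by rw [hcells]; exact ⟨hc, h1⟩)
        rw [Set.mem_Icc] at this
        omega
      · rw [hub c h1, hub c' h2] at heq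
        exact hSbij.2.1 (by rw [hcells]; exact ⟨hc, h1⟩) (by rw [hcells]; exact ⟨hc', h2⟩) heq
    · intro y hy
      rw [Set.mem_Icc] at hy
      by_cases hy' : y = n
      · exact ⟨pt, hptmem, by rw [hup, hy']⟩
      · obtain ⟨c, hc, hcy⟩ := hSbij.2.2 (Set.mem_Icc.mpr ⟨hy.1, by omega⟩)
        rw [hcells] at hc
        exact ⟨c, hc.1, by rw [hub c hc.2, hcy]⟩
  · -- rows
    intro i j h1 h2
    rw [skew_empty] at h1 h2
    by_cases hp1 : ((i, j) : ℕ × ℕ) = pt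
    · exfalso
      have h2' : 1 ≤ i ∧ 1 ≤ j + 1 ∧ j + 1 ≤ lam.get i := (mem_cells lam).mp h2
      have e1 : i = r := congrArg Prod.fst hp1
      have e2 : j = lam.get r := congrArg Prod.snd hp1
      rw [e1] at h2'
      omega
    · by_cases hp2 : ((i, j + 1) : ℕ × ℕ) = pt
      · rw [hub _ hp1, hp2, hup]
        have := hSle (i, j) (by rw [hcells]; exact ⟨h1, hp1⟩)
        rw [Set.mem_Icc] at this
        omega
      · rw [hub _ hp1, hub _ hp2]
        exact hSrow i j (by rw [skew_empty, hcells]; exact ⟨h1, hp1⟩)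
          (by rw [skew_empty, hcells]; exact ⟨h2, hp2⟩)
  · -- columns
    intro i j h1 h2
    rw [skew_empty] at h1 h2
    by_cases hp1 : ((i, j) : ℕ × ℕ) = pt
    · exfalso
      have h2' : 1 ≤ i + 1 ∧ 1 ≤ j ∧ j ≤ lam.get (i + 1) := (mem_cells lam).mp h2
      have e1 : i = r := congrArg Prod.fst hp1
      have e2 : j = lam.get r := congrArg Prod.snd hp1
      rw [e1] at h2'
      omega
    · by_cases hp2 : ((i + 1, j) : ℕ × ℕ) = pt
      · rw [hub _ hp1, hp2, hup]
        have := hSle (i, j) (by rw [hcells]; exact ⟨h1, hp1⟩)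
        rw [Set.mem_Icc] at this
        omega
      · rw [hub _ hp1, hub _ hp2]
        exact hScol i j (by rw [skew_empty, hcells]; exact ⟨h1, hp1⟩)
          (by rw [skew_empty, hcells]; exact ⟨h2, hp2⟩)

theorem up_inj (hr : r ∈ corners lam m) :
    Set.InjOn (up lam ((cells lam).ncard) r) (SYT (dec lam r) YPartition.empty) := by
  obtain ⟨hr1, hrm, hcr⟩ := mem_corners.mp hr
  intro S hS S' hS' heq
  funext c
  by_cases hc : c = (r, lam.get r)
  · have h1 : S c = 0 := by
      apply hS.1
      rw [skew_empty, cells_dec hr1 hcr, hc]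
      exact fun h => h.2 rfl
    have h2 : S' c = 0 := by
      apply hS'.1
      rw [skew_empty, cells_dec hr1 hcr, hc]
      exact fun h => h.2 rfl
    rw [h1, h2]
  · have := congrFun heq c
    rwa [up, up, if_neg hc, if_neg hc] at this

theorem decomp (hb : Bnd lam m) (hn : 1 ≤ (cells lam).ncard) :
    SYT lam YPartition.empty =
      ⋃ r ∈ corners lam m, up lam ((cells lam).ncard) r ''
        SYT (dec lam r) YPartition.empty := by
  set n := (cells lam).ncard with hn'
  ext T
  simp only [Set.mem_iUnion, Set.mem_image, exists_prop]
  constructor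
  · intro hT
    obtain ⟨hT0, hTbij, hTrow, hTcol⟩ := hT
    rw [skew_empty] at hTbij
    have hcn : (cells lam).ncard = n := rfl
    rw [hcn] at hTbij
    obtain ⟨c₀, hc₀, hTc₀⟩ := hTbij.2.2 (Set.mem_Icc.mpr ⟨hn, le_rfl⟩)
    obtain ⟨i, j⟩ := c₀
    have h123 : 1 ≤ i ∧ 1 ≤ j ∧ j ≤ lam.get i := (mem_cells lam).mp hc₀
    obtain ⟨h1, h2, h3⟩ := h123
    have hc₀' : ((i, j) : ℕ × ℕ) ∈ cells lam := hc₀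
    have hj : j = lam.get i := by
      by_contra hne
      have hmem : ((i, j + 1) : ℕ × ℕ) ∈ cells lam := by
        rw [mem_cells]
        show 1 ≤ i ∧ 1 ≤ j + 1 ∧ j + 1 ≤ lam.get i
        omega
      have hlt := hTrow i j hc₀' hmem
      have := hTbij.1 hmem
      rw [Set.mem_Icc] at this
      omega
    have hcorner : lam.get (i + 1) < lam.get i := by
      by_contra hge
      have hmem : ((i + 1, j) : ℕ × ℕ) ∈ cells lam := by
        rw [mem_cells]
        show 1 ≤ i + 1 ∧ 1 ≤ j ∧ j ≤ lam.get (i + 1)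
        omega
      have hlt := hTcol i j hc₀' hmem
      have := hTbij.1 hmem
      rw [Set.mem_Icc] at this
      omega
    have him : i ≤ m := by
      by_contra hgt
      have := hb i (by omega)
      omega
    have hri : i ∈ corners lam m := mem_corners.mpr ⟨h1, him, hcorner⟩
    subst hj
    set pt : ℕ × ℕ := (i, lam.get i) with hpt
    have hptmem : pt ∈ cells lam := hc₀'
    have hcells : cells (dec lam i) = cells lam \ {pt} := cells_dec h1 hcorner
    have hnd : (cells (dec lam i)).ncard = n - 1 := ncard_cells_dec h1 hcorner
    set S : ℕ × ℕ → ℕ := fun c => if c = pt then 0 else T c with hSdef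
    have hST : Set.EqOn T S (cells (dec lam i)) := by
      intro c hc
      rw [hcells] at hc
      have hcp : ¬ c = pt := hc.2
      show T c = if c = pt then 0 else T c
      rw [if_neg hcp]
    refine ⟨i, hri, S, ⟨?_, ?_, ?_, ?_⟩, ?_⟩
    · intro c hc
      rw [skew_empty, hcells] at hc
      by_cases hcp : c = pt
      · show (if c = pt then 0 else T c) = 0
        rw [if_pos hcp]
      · show (if c = pt then 0 else T c) = 0
        rw [if_neg hcp]
        apply hT0
        intro hcl
        exact hc ⟨hcl, hcp⟩
    · rw [skew_empty, hnd]
      apply Set.BijOn.congr _ hST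
      refine ⟨?_, hTbij.2.1.mono (by rw [hcells]; exact Set.diff_subset), ?_⟩
      · intro c hc
        rw [hcells] at hc
        have h5 := hTbij.1 hc.1
        rw [Set.mem_Icc] at h5 ⊢
        have : T c ≠ n := by
          intro hTc
          exact hc.2 (hTbij.2.1 hc.1 hptmem (by rw [hTc, hTc₀]))
        omega
      · intro y hy
        rw [Set.mem_Icc] at hy
        obtain ⟨c, hc, hcy⟩ := hTbij.2.2 (Set.mem_Icc.mpr ⟨hy.1, by omega⟩)
        have hcp : c ≠ pt := by
          intro h
          rw [h, hTc₀] at hcy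
          omega
        exact ⟨c, by rw [hcells]; exact ⟨hc, hcp⟩, hcy⟩
    · intro a b ha hb'
      rw [skew_empty] at ha hb'
      rw [← hST ha, ← hST hb']
      have ha2 : ((a, b) : ℕ × ℕ) ∈ cells lam := by rw [hcells] at ha; exact ha.1
      have hb2 : ((a, b + 1) : ℕ × ℕ) ∈ cells lam := by rw [hcells] at hb'; exact hb'.1
      exact hTrow a b ha2 hb2
    · intro a b ha hb'
      rw [skew_empty] at ha hb'
      rw [← hST ha, ← hST hb']
      have ha2 : ((a, b) : ℕ × ℕ) ∈ cells lam := by rw [hcells] at ha; exact ha.1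
      have hb2 : ((a + 1, b) : ℕ × ℕ) ∈ cells lam := by rw [hcells] at hb'; exact hb'.1
      exact hTcol a b ha2 hb2
    · funext c
      rw [up]
      by_cases hc : c = pt
      · rw [if_pos hc, hc, hTc₀]
      · rw [if_neg hc]
        show (if c = pt then 0 else T c) = T c
        rw [if_neg hc]
  · rintro ⟨r, hr, S, hS, rfl⟩
    exact up_mem hr hS

theorem branch (hb : Bnd lam m) (hn : 1 ≤ (cells lam).ncard) :
    (SYT lam YPartition.empty).ncard =
      ∑ r ∈ corners lam m, (SYT (dec lam r) YPartition.empty).ncard := by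
  rw [decomp hb hn, ncard_biUnion]
  · exact Finset.sum_congr rfl fun r hr =>
      Set.ncard_image_of_injOn (up_inj hr)
  · exact fun r hr => (SYT_finite (dec lam r)).image _
  · intro r hr r' hr' hne
    obtain ⟨hr1, hrm, hcr⟩ := mem_corners.mp hr
    obtain ⟨hr1', hrm', hcr'⟩ := mem_corners.mp hr'
    rw [Set.disjoint_left]
    rintro T ⟨S, hS, rfl⟩ ⟨S', hS', hTS'⟩
    set n := (cells lam).ncard with hn'
    have hn1 : 1 ≤ n := hn
    have hv : up lam n r S (r, lam.get r) = n := if_pos rfl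
    have hne2 : ((r, lam.get r) : ℕ × ℕ) ≠ (r', lam.get r') := by
      intro h
      exact hne (congrArg Prod.fst h)
    have hv' : up lam n r' S' (r, lam.get r) = S' (r, lam.get r) := if_neg hne2
    rw [← hTS'] at hv
    rw [hv'] at hv
    -- now S' (r, lam.get r) = n, contradiction
    obtain ⟨hS'0, hS'bij, -, -⟩ := hS'
    rw [skew_empty, ncard_cells_dec hr1' hcr'] at hS'bij
    by_cases hmem : ((r, lam.get r) : ℕ × ℕ) ∈ cells (dec lam r')
    · have := hS'bij.1 hmem
      rw [Set.mem_Icc] at this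
      have hptm : ((r, lam.get r) : ℕ × ℕ) ∈ cells lam := corner_mem_cells hr1 hcr
      have : n - 1 < n := by omega
      omega
    · have : S' (r, lam.get r) = 0 := hS'0 _ (by rw [skew_empty]; exact hmem)
      omega

end Branch

end HLF
namespace HLF

open Finset

theorem ell_dec {lam : YPartition} {m r i : ℕ} (hr1 : 1 ≤ r)
    (hcr : lam.get (r + 1) < lam.get r) (hi1 : 1 ≤ i) :
    ell (dec lam r) m i = if i = r then ell lam m i - 1 else ell lam m i := by
  rw [ell, get_dec_corner hr1 hcr hi1, ell]
  by_cases h : i = r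
  · rw [if_pos h, if_pos h]
    subst h
    omega
  · rw [if_neg h, if_neg h]

theorem DQ_congr {x y : ℕ → ℚ} {m : ℕ} (h : ∀ i ∈ Finset.Icc 1 m, x i = y i) :
    DQ x m = DQ y m := by
  refine Finset.prod_congr rfl fun i hi => Finset.prod_congr rfl fun k hk => ?_
  rw [Finset.mem_Icc] at hi
  rw [Finset.mem_Ioc] at hk
  rw [h i (Finset.mem_Icc.mpr hi), h k (Finset.mem_Icc.mpr ⟨by omega, hk.2⟩)]

theorem dn_cast (lam : YPartition) (m : ℕ) :
    ((Dn lam m : ℕ) : ℚ) = DQ (fun i => (ell lam m i : ℚ)) m := by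
  rw [Dn, Nat.cast_prod]
  refine Finset.prod_congr rfl fun i hi => ?_
  rw [Nat.cast_prod]
  refine Finset.prod_congr rfl fun k hk => ?_
  rw [Finset.mem_Ioc] at hk
  rw [Nat.cast_sub (le_of_lt (ell_lt lam hk.1 hk.2))]

theorem dn_dec_cast {lam : YPartition} {m r : ℕ} (hr1 : 1 ≤ r)
    (hcr : lam.get (r + 1) < lam.get r) :
    ((Dn (dec lam r) m : ℕ) : ℚ) = DQ (decSeq (fun i => (ell lam m i : ℚ)) r) m := by
  rw [dn_cast]
  apply DQ_congr
  intro i hi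
  rw [Finset.mem_Icc] at hi
  rw [ell_dec hr1 hcr hi.1, decSeq]
  by_cases h : i = r
  · rw [if_pos h, if_pos h]
    have : 1 ≤ ell lam m i := by
      rw [ell]
      have : 1 ≤ lam.get i := by rw [h]; omega
      omega
    rw [Nat.cast_sub this, Nat.cast_one]
  · rw [if_neg h, if_neg h]

theorem fact_prod_dec {lam : YPartition} {m r : ℕ} (hr1 : 1 ≤ r) (hrm : r ≤ m)
    (hcr : lam.get (r + 1) < lam.get r) :
    (∏ i ∈ Finset.Icc 1 m, Nat.factorial (ell (dec lam r) m i)) * ell lam m r =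
      ∏ i ∈ Finset.Icc 1 m, Nat.factorial (ell lam m i) := by
  have hmem : r ∈ Finset.Icc 1 m := Finset.mem_Icc.mpr ⟨hr1, hrm⟩
  rw [← Finset.mul_prod_erase _ _ hmem,
    ← Finset.mul_prod_erase _ (fun i => Nat.factorial (ell lam m i)) hmem]
  have h1 : ∀ i ∈ (Finset.Icc 1 m).erase r,
      Nat.factorial (ell (dec lam r) m i) = Nat.factorial (ell lam m i) := by
    intro i hi
    rw [Finset.mem_erase, Finset.mem_Icc] at hi
    rw [ell_dec hr1 hcr hi.2.1, if_neg hi.1]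
  rw [Finset.prod_congr rfl h1, ell_dec hr1 hcr hr1, if_pos rfl]
  have hpos : 0 < ell lam m r := by
    rw [ell]; omega
  rw [mul_comm, ← mul_assoc, Nat.mul_factorial_pred hpos.ne']

theorem sum_ell (lam : YPartition) (m : ℕ) :
    ∑ i ∈ Finset.Icc 1 m, ((ell lam m i : ℕ) : ℚ) =
      (∑ i ∈ Finset.Icc 1 m, (lam.get i : ℚ)) + (m : ℚ) * ((m : ℚ) - 1) / 2 := by
  have h1 : ∑ i ∈ Finset.Icc 1 m, (m - i) = ∑ j ∈ Finset.range m, j := by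
    apply Finset.sum_nbij' (fun i => m - i) (fun j => m - j)
    · intro a ha; rw [Finset.mem_Icc] at ha; rw [Finset.mem_range]; omega
    · intro a ha; rw [Finset.mem_range] at ha; rw [Finset.mem_Icc]; omega
    · intro a ha; rw [Finset.mem_Icc] at ha; omega
    · intro a ha; rw [Finset.mem_range] at ha; omega
    · intro a ha; rfl
  have h2 : (∑ j ∈ Finset.range m, j) * 2 = m * (m - 1) := Finset.sum_range_id_mul_two m
  have h3 : ∀ i ∈ Finset.Icc 1 m, ((ell lam m i : ℕ) : ℚ) = (lam.get i : ℚ) + ((m - i : ℕ) : ℚ) := by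
    intro i hi
    rw [ell]
    push_cast
    ring
  rw [Finset.sum_congr rfl h3, Finset.sum_add_distrib]
  congr 1
  rw [← Nat.cast_sum, h1]
  have h4 : ((∑ j ∈ Finset.range m, j : ℕ) : ℚ) * 2 = (m : ℚ) * ((m : ℚ) - 1) := by
    have h5 : ((m * (m - 1) : ℕ) : ℚ) = (m : ℚ) * ((m : ℚ) - 1) := by
      rcases Nat.eq_zero_or_pos m with rfl | hm
      · simp
      · push_cast [Nat.cast_sub hm]
        ring
    rw [← h5, ← h2]
    push_cast
    ring
  linarith

theorem dq_noncorner {lam : YPartition} {m r : ℕ} (hb : Bnd lam m) (hm1 : 1 ≤ lam.get m)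
    (hr1 : 1 ≤ r) (hrm : r ≤ m) (hnc : ¬ lam.get (r + 1) < lam.get r) :
    DQ (decSeq (fun i => (ell lam m i : ℚ)) r) m = 0 := by
  have hrem : r < m := by
    rcases Nat.lt_or_ge r m with h | h
    · exact h
    · exfalso
      have hrm' : r = m := by omega
      subst hrm'
      have := hb (r + 1) (by omega)
      omega
  have hge : lam.get (r + 1) = lam.get r := by
    have := get_anti lam (show r ≤ r + 1 by omega)
    omega
  apply Finset.prod_eq_zero (Finset.mem_Icc.mpr ⟨hr1, hrm⟩)
  apply Finset.prod_eq_zero (Finset.mem_Ioc.mpr ⟨Nat.lt_succ_self r, by omega⟩)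
  rw [decSeq, decSeq, if_pos rfl, if_neg (by omega : ¬ r + 1 = r)]
  have h1 : ell lam m r = ell lam m (r + 1) + 1 := by
    rw [ell, ell]
    omega
  rw [h1]
  push_cast
  ring

end HLF
namespace HLF

open Finset

theorem main_thm : ∀ n : ℕ, ∀ lam : YPartition, (cells lam).ncard = n →
    ((SYT lam YPartition.empty).ncard : ℚ) =
      (Nat.factorial (cells lam).ncard : ℚ) /
        ∏ᶠ c ∈ cells lam, (hookLength lam c : ℚ) := by
  intro n
  induction n using Nat.strong_induction_on with
  | _ n ih =>
    intro lam hn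
    rcases Nat.eq_zero_or_pos n with rfl | hpos
    · have hempty : cells lam = ∅ := (Set.ncard_eq_zero (cells_finite lam)).mp hn
      rw [SYT_zero lam hn, Set.ncard_singleton, hn, hempty, finprod_mem_empty]
      norm_num
    · -- choose the number of rows m
      obtain ⟨m₀, hb₀⟩ := exists_bnd lam
      have hn1 : 1 ≤ (cells lam).ncard := by omega
      obtain ⟨c₀, hc₀⟩ := (Set.ncard_pos (cells_finite lam)).mp (by omega)
      have hc₀' := (mem_cells lam).mp hc₀
      have hc₀s : c₀.1 ∈ (Finset.Icc 1 m₀).filter (fun i => 1 ≤ lam.get i) := by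
        rw [Finset.mem_filter, Finset.mem_Icc]
        refine ⟨⟨hc₀'.1, ?_⟩, by omega⟩
        by_contra h
        have := hb₀ c₀.1 (by omega)
        omega
      set m := ((Finset.Icc 1 m₀).filter (fun i => 1 ≤ lam.get i)).max' ⟨c₀.1, hc₀s⟩ with hm
      have hms : m ∈ (Finset.Icc 1 m₀).filter (fun i => 1 ≤ lam.get i) :=
        Finset.max'_mem _ _
      rw [Finset.mem_filter, Finset.mem_Icc] at hms
      have hm1 : 1 ≤ m := hms.1.1
      have hgm : 1 ≤ lam.get m := hms.2
      have hb : Bnd lam m := by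
        intro i hi
        by_cases h : i ≤ m₀
        · by_contra hne
          have hmem : i ∈ (Finset.Icc 1 m₀).filter (fun j => 1 ≤ lam.get j) := by
            rw [Finset.mem_filter, Finset.mem_Icc]
            exact ⟨⟨by omega, h⟩, by omega⟩
          have := Finset.le_max' _ i hmem
          omega
        · exact hb₀ i (by omega)
      -- injectivity of ell
      have hxinj : Set.InjOn (fun i => ((ell lam m i : ℕ) : ℚ)) ↑(Finset.Icc 1 m) := by
        intro a ha b hb' heq
        rw [Finset.coe_Icc, Set.mem_Icc] at ha hb'
        have heq2 : ell lam m a = ell lam m b := Nat.cast_injective heq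
        by_contra hne
        rcases Nat.lt_or_ge a b with h | h
        · have := ell_lt lam h hb'.2; omega
        · have h' : b < a := by omega
          have := ell_lt lam h' ha.2; omega
      -- main cast equation for lam
      set F : ℚ := ∏ i ∈ Finset.Icc 1 m, ((Nat.factorial (ell lam m i) : ℕ) : ℚ) with hF
      set Hq : ℚ := ∏ c ∈ cellsF lam m, ((hookLength lam c : ℕ) : ℚ) with hHq
      have hfin_rw : (∏ᶠ c ∈ cells lam, ((hookLength lam c : ℕ) : ℚ)) = Hq := by
        rw [← coe_cellsF lam hb, finprod_mem_coe_finset]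
      have hc1 : Hq * DQ (fun i => ((ell lam m i : ℕ) : ℚ)) m = F := by
        have h3 := prod_hook lam hb
        have h4 := congrArg (fun t : ℕ => (t : ℚ)) h3
        simp only [Nat.cast_mul, Nat.cast_prod] at h4
        rw [dn_cast] at h4
        exact h4
      have hHq_pos : 0 < Hq := by
        rw [hHq]
        apply Finset.prod_pos
        intro c hc
        have hcm := (mem_cells lam).mp ((mem_cellsF lam hb).mp hc)
        have : hookLength lam (c.1, c.2) = hkl lam m c.1 c.2 :=
          hookLength_eq lam hb hcm.1 hcm.2.1 hcm.2.2
        have h5 := hkl_pos lam (m := m) hcm.2.2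
        have : 1 ≤ hookLength lam c := by rw [show c = (c.1, c.2) from rfl, this]; exact h5
        exact_mod_cast this
      have hF_pos : 0 < F := by
        rw [hF]
        apply Finset.prod_pos
        intro i _
        exact_mod_cast Nat.factorial_pos _
      have hDQ_ne : DQ (fun i => ((ell lam m i : ℕ) : ℚ)) m ≠ 0 := by
        intro h
        rw [h, mul_zero] at hc1
        exact absurd hc1.symm (ne_of_gt hF_pos)
      -- per-corner equation
      have hper : ∀ r ∈ corners lam m,
          ((SYT (dec lam r) YPartition.empty).ncard : ℚ) * F =
            ((Nat.factorial (n - 1) : ℕ) : ℚ) *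
              (((ell lam m r : ℕ) : ℚ) *
                DQ (decSeq (fun i => ((ell lam m i : ℕ) : ℚ)) r) m) := by
        intro r hr
        obtain ⟨hr1, hrm, hcr⟩ := mem_corners.mp hr
        have hbmu : Bnd (dec lam r) m := bnd_dec hb hr1 hrm hcr
        have hndr : (cells (dec lam r)).ncard = n - 1 := by
          rw [ncard_cells_dec hr1 hcr, hn]
        have hIH := ih (n - 1) (by omega) (dec lam r) hndr
        have hfr : (∏ᶠ c ∈ cells (dec lam r), ((hookLength (dec lam r) c : ℕ) : ℚ)) =
            ∏ c ∈ cellsF (dec lam r) m, ((hookLength (dec lam r) c : ℕ) : ℚ) := by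
          rw [← coe_cellsF _ hbmu, finprod_mem_coe_finset]
        rw [hndr, hfr] at hIH
        set Hqr : ℚ := ∏ c ∈ cellsF (dec lam r) m, ((hookLength (dec lam r) c : ℕ) : ℚ)
          with hHqr
        have hHqr_pos : 0 < Hqr := by
          rw [hHqr]
          apply Finset.prod_pos
          intro c hc
          have hcm := (mem_cells (dec lam r)).mp ((mem_cellsF (dec lam r) hbmu).mp hc)
          have he : hookLength (dec lam r) (c.1, c.2) = hkl (dec lam r) m c.1 c.2 :=
            hookLength_eq (dec lam r) hbmu hcm.1 hcm.2.1 hcm.2.2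
          have h5 := hkl_pos (dec lam r) (m := m) hcm.2.2
          have h6 : 1 ≤ hookLength (dec lam r) c := by
            rw [show c = (c.1, c.2) from rfl, he]; exact h5
          exact_mod_cast h6
        have h5 : ((SYT (dec lam r) YPartition.empty).ncard : ℚ) * Hqr =
            ((Nat.factorial (n - 1) : ℕ) : ℚ) := by
          rw [hIH, div_mul_cancel₀ _ (ne_of_gt hHqr_pos)]
        have h1 := prod_hook (dec lam r) hbmu
        have h2 := fact_prod_dec (lam := lam) (m := m) hr1 hrm hcr
        have h3 : (∏ c ∈ cellsF (dec lam r) m, hookLength (dec lam r) c) *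
            Dn (dec lam r) m * ell lam m r =
            ∏ i ∈ Finset.Icc 1 m, Nat.factorial (ell lam m i) := by
          have h3' : ∀ i ∈ Finset.Icc 1 m, ell (dec lam r) m i =
              ell (dec lam r) m i := fun _ _ => rfl
          rw [h1]
          exact h2
        have h4 := congrArg (fun t : ℕ => (t : ℚ)) h3
        simp only [Nat.cast_mul, Nat.cast_prod] at h4
        rw [dn_dec_cast hr1 hcr] at h4
        rw [← hHqr, ← hF] at h4
        linear_combination (DQ (decSeq (fun i => ((ell lam m i : ℕ) : ℚ)) r) m *
          ((ell lam m r : ℕ) : ℚ)) * h5 -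
          ((SYT (dec lam r) YPartition.empty).ncard : ℚ) * h4
      -- sum over corners
      have hA : ((SYT lam YPartition.empty).ncard : ℚ) =
          ∑ r ∈ corners lam m, ((SYT (dec lam r) YPartition.empty).ncard : ℚ) := by
        rw [branch hb hn1]
        push_cast
        rfl
      have hAF : ((SYT lam YPartition.empty).ncard : ℚ) * F =
          ((Nat.factorial (n - 1) : ℕ) : ℚ) *
            ∑ r ∈ corners lam m, (((ell lam m r : ℕ) : ℚ) *
              DQ (decSeq (fun i => ((ell lam m i : ℕ) : ℚ)) r) m) := by
        rw [hA, Finset.sum_mul, Finset.sum_congr rfl hper, Finset.mul_sum]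
      have hext : ∑ r ∈ corners lam m, (((ell lam m r : ℕ) : ℚ) *
            DQ (decSeq (fun i => ((ell lam m i : ℕ) : ℚ)) r) m) =
          ∑ r ∈ Finset.Icc 1 m, (((ell lam m r : ℕ) : ℚ) *
            DQ (decSeq (fun i => ((ell lam m i : ℕ) : ℚ)) r) m) := by
        apply Finset.sum_subset (Finset.filter_subset _ _)
        intro r hrIcc hrnc
        rw [Finset.mem_Icc] at hrIcc
        have hnc : ¬ lam.get (r + 1) < lam.get r := by
          intro h
          exact hrnc (mem_corners.mpr ⟨hrIcc.1, hrIcc.2, h⟩)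
        rw [dq_noncorner hb hgm hrIcc.1 hrIcc.2 hnc, mul_zero]
      have hvr := vandermonde_rec (fun i => ((ell lam m i : ℕ) : ℚ)) hm1 hxinj
      have hsx : ∑ i ∈ Finset.Icc 1 m, ((ell lam m i : ℕ) : ℚ) =
          (n : ℚ) + (m : ℚ) * ((m : ℚ) - 1) / 2 := by
        rw [sum_ell]
        congr 1
        rw [← Nat.cast_sum, ← ncard_cells lam hb, hn]
      have hfact : (n : ℚ) * ((Nat.factorial (n - 1) : ℕ) : ℚ) =
          ((Nat.factorial n : ℕ) : ℚ) := by
        rw [← Nat.cast_mul, Nat.mul_factorial_pred hpos.ne']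
      -- final computation
      rw [hn, hfin_rw, eq_div_iff (ne_of_gt hHq_pos)]
      apply mul_right_cancel₀ hDQ_ne
      calc ((SYT lam YPartition.empty).ncard : ℚ) * Hq *
            DQ (fun i => ((ell lam m i : ℕ) : ℚ)) m
          = ((SYT lam YPartition.empty).ncard : ℚ) * F := by rw [mul_assoc, hc1]
        _ = ((Nat.factorial (n - 1) : ℕ) : ℚ) *
              ∑ r ∈ Finset.Icc 1 m, (((ell lam m r : ℕ) : ℚ) *
                DQ (decSeq (fun i => ((ell lam m i : ℕ) : ℚ)) r) m) := by
            rw [hAF, hext]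
        _ = ((Nat.factorial n : ℕ) : ℚ) *
              DQ (fun i => ((ell lam m i : ℕ) : ℚ)) m := by
            rw [hvr, hsx, ← hfact]
            ring
        _ = _ := by ring

end HLF

/-- **Hook length formula of Frame–Robinson–Thrall.**  For a partition `λ` with
`n = |Y(λ)|` boxes, one has `|SYT(λ)| = n! / ∏_{c ∈ Y(λ)} h_λ(c)`. -/
theorem frame_robinson_thrall (lam : YPartition) :
    ((SYT lam YPartition.empty).ncard : ℚ) =
      (Nat.factorial (cells lam).ncard : ℚ) /
        ∏ᶠ c ∈ cells lam, (hookLength lam c : ℚ) := by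
  exact HLF.main_thm _ lam rfl
end

section
/- Let λ/μ be a skew partition with λ ≠ μ. Then, in the field of rational functions over ℚ in the indeterminates z_i (i ∈ ℤ), one has Σ_{T ∈ SYT(λ/μ)} z_T = (Σ_{(i,j) ∈ Y(λ/μ)} z_{j−i})^{−1} · Σ_{ν : μ ⋖ ν ⊆ λ} Σ_{T ∈ SYT(λ/ν)} z_T, where the outer sum on the right ranges over all partitions ν with μ ⋖ ν and ν ⊆ λ. -/
section ZTrec

open Classical

lemma YPartition.ext' {p q : YPartition} (h : p.f = q.f) : p = q := by
  cases p; cases q; simpa using h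

lemma YPartition.get_antitone (p : YPartition) {i j : ℕ} (h2 : i ≤ j) :
    p.get j ≤ p.get i := p.antitone' (by omega)

lemma sub_f {mu lam : YPartition} (h : YPartition.Sub mu lam) (j : ℕ) : mu.f j ≤ lam.f j :=
  h (j+1) (by omega)

lemma skewCells_finite (lam mu : YPartition) : (skewCells lam mu).Finite := by
  obtain ⟨N, hN⟩ := lam.eventually_zero'
  apply Set.Finite.subset (Set.finite_Icc (1,1) (N+1, lam.f 0))
  rintro ⟨i, j⟩ h
  obtain ⟨hi, hj1, hj2⟩ := h
  dsimp only at hi hj1 hj2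
  have h1 : lam.get i ≤ lam.f 0 := lam.antitone' (Nat.zero_le _)
  have h2 : i ≤ N + 1 := by
    by_contra hc
    have h3 : lam.get i = 0 := hN (i-1) (by omega)
    omega
  simp only [Set.mem_Icc, Prod.le_def]
  exact ⟨⟨hi, by omega⟩, h2, by omega⟩

lemma exists_cell (lam mu : YPartition) (hsub : YPartition.Sub mu lam) (hne : lam ≠ mu) :
    (skewCells lam mu).Nonempty := by
  have hex : ∃ j, mu.f j ≠ lam.f j := by
    by_contra h; push_neg at h
    exact hne (YPartition.ext' (funext fun j => (h j).symm))
  obtain ⟨j, hj⟩ := hex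
  have hle := sub_f hsub j
  refine ⟨(j+1, mu.f j + 1), ⟨by omega, ?_, ?_⟩⟩ <;>
    simp only [YPartition.get, Nat.add_sub_cancel] <;> omega

lemma SYT_finite (lam mu : YPartition) : (SYT lam mu).Finite := by
  classical
  have hS : (skewCells lam mu).Finite := skewCells_finite lam mu
  set n := (skewCells lam mu).ncard with hn
  have key : ∀ T ∈ SYT lam mu, ∀ c, T c ≤ n := by
    intro T hT c
    by_cases hc : c ∈ skewCells lam mu
    · exact (Set.mem_Icc.mp (hT.2.1.mapsTo hc)).2
    · simp [hT.1 c hc]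
  have hinj : Set.InjOn (fun T => (fun c : hS.toFinset => T (c : ℕ × ℕ))) (SYT lam mu) := by
    intro T1 h1 T2 h2 he
    funext c
    by_cases hc : c ∈ skewCells lam mu
    · exact congrFun he ⟨c, hS.mem_toFinset.mpr hc⟩
    · rw [h1.1 c hc, h2.1 c hc]
  apply Set.Finite.of_finite_image ?_ hinj
  apply Set.Finite.subset (Set.finite_Icc (fun _ : hS.toFinset => 0) (fun _ => n))
  rintro g ⟨T, hT, rfl⟩
  simp only [Set.mem_Icc]
  exact ⟨fun c => Nat.zero_le _, fun c => key T hT _⟩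

end ZTrec
/-- Add a box to row `k` of `mu` (1-indexed), when legal; otherwise `mu`. -/
noncomputable def addBox (mu : YPartition) (k : ℕ) : YPartition :=
  if h : 1 ≤ k ∧ (k = 1 ∨ mu.f (k-1) < mu.f (k-2)) then
    { f := fun i => if i = k - 1 then mu.f i + 1 else mu.f i
      antitone' := by
        intro i j hij
        have ha := mu.antitone' hij
        by_cases h1 : j = k - 1
        · by_cases h2 : i = k - 1
          · simp only [if_pos h1, if_pos h2]; omega
          · rw [if_pos h1, if_neg h2]
            rcases h.2 with hk1 | hlt
            · omega
            · have h3 : mu.f (k-2) ≤ mu.f i := mu.antitone' (by omega)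
              rw [h1]
              omega
        · rw [if_neg h1]
          by_cases h2 : i = k - 1
          · rw [if_pos h2]; omega
          · rw [if_neg h2]; omega
      eventually_zero' := by
        obtain ⟨N, hN⟩ := mu.eventually_zero'
        refine ⟨N + k, fun i hi => ?_⟩
        have h1 : i ≠ k - 1 := by omega
        simp [h1, hN i (by omega)] }
  else mu

lemma addBox_f {mu : YPartition} {k : ℕ}
    (h : 1 ≤ k ∧ (k = 1 ∨ mu.f (k-1) < mu.f (k-2))) (i : ℕ) :
    (addBox mu k).f i = if i = k - 1 then mu.f i + 1 else mu.f i := by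
  rw [addBox, dif_pos h]

lemma addBox_get {mu : YPartition} {k : ℕ}
    (h : 1 ≤ k ∧ (k = 1 ∨ mu.f (k-1) < mu.f (k-2))) {i : ℕ} (hi : 1 ≤ i) :
    (addBox mu k).get i = if i = k then mu.get i + 1 else mu.get i := by
  have h2 : i - 1 = k - 1 ↔ i = k := by omega
  simp only [YPartition.get, addBox_f h, h2]

lemma addBox_covers {mu : YPartition} {k : ℕ}
    (h : 1 ≤ k ∧ (k = 1 ∨ mu.f (k-1) < mu.f (k-2))) :
    YPartition.Covers mu (addBox mu k) := by
  refine ⟨k, h.1, ?_, ?_⟩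
  · rw [addBox_get h h.1, if_pos rfl]
  · intro i hi hik
    rw [addBox_get h hi, if_neg hik]

lemma covers_eq_addBox {mu nu : YPartition} (h : YPartition.Covers mu nu) :
    ∃ k, (1 ≤ k ∧ (k = 1 ∨ mu.f (k-1) < mu.f (k-2))) ∧ nu = addBox mu k ∧
      nu.get k = mu.get k + 1 ∧ (∀ i, 1 ≤ i → i ≠ k → nu.get i = mu.get i) := by
  obtain ⟨k, hk1, hk2, hk3⟩ := h
  have hcond : 1 ≤ k ∧ (k = 1 ∨ mu.f (k-1) < mu.f (k-2)) := by
    refine ⟨hk1, ?_⟩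
    by_cases hk : k = 1
    · exact Or.inl hk
    · right
      have h1 : nu.get k ≤ nu.get (k-1) := nu.get_antitone (by omega)
      have h2 : nu.get (k-1) = mu.get (k-1) := hk3 (k-1) (by omega) (by omega)
      have h3 : mu.f (k-1) = mu.get k := rfl
      have h4 : mu.get (k-1) = mu.f (k-2) := by
        unfold YPartition.get
        rw [show k-1-1 = k-2 from by omega]
      omega
  refine ⟨k, hcond, ?_, hk2, hk3⟩
  apply YPartition.ext'
  funext j
  have hj : nu.f j = nu.get (j+1) := rfl
  have hj2 : mu.f j = mu.get (j+1) := rfl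
  rw [hj, show (addBox mu k).f j = (addBox mu k).get (j+1) from rfl,
    addBox_get hcond (by omega)]
  by_cases hjk : j + 1 = k
  · rw [if_pos hjk, hjk]; exact hk2
  · rw [if_neg hjk, hk3 (j+1) (by omega) hjk]

lemma covers_finite (lam mu : YPartition) :
    {nu : YPartition | YPartition.Covers mu nu ∧ YPartition.Sub nu lam}.Finite := by
  obtain ⟨N, hN⟩ := lam.eventually_zero'
  apply Set.Finite.subset ((Set.finite_Icc 1 (N+1)).image (addBox mu))
  rintro nu ⟨hcov, hsub⟩
  obtain ⟨k, hcond, heq, hget, -⟩ := covers_eq_addBox hcov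
  refine ⟨k, ?_, heq.symm⟩
  have h1 : 1 ≤ nu.get k := by omega
  have h2 : nu.get k ≤ lam.get k := hsub k hcond.1
  have h3 : k ≤ N + 1 := by
    by_contra hc
    have : lam.get k = 0 := hN (k-1) (by omega)
    omega
  exact ⟨hcond.1, h3⟩

/-- If `nu` is obtained from `mu` by adding a box in row `k`, then the skew cells
of `lam/nu` are those of `lam/mu` minus the added box. -/
lemma skewCells_covers {lam mu nu : YPartition} {k : ℕ} (hk1 : 1 ≤ k)
    (hget : nu.get k = mu.get k + 1) (hoth : ∀ i, 1 ≤ i → i ≠ k → nu.get i = mu.get i) :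
    skewCells lam nu = skewCells lam mu \ {(k, mu.get k + 1)} := by
  ext ⟨i, j⟩
  simp only [skewCells, Set.mem_setOf_eq, Set.mem_diff, Set.mem_singleton_iff,
    Prod.mk.injEq]
  by_cases hik : i = k
  · subst hik
    rw [hget]
    constructor
    · rintro ⟨h1, h2, h3⟩; exact ⟨⟨h1, by omega, h3⟩, by omega⟩
    · rintro ⟨⟨h1, h2, h3⟩, h4⟩
      have : j ≠ mu.get i + 1 := by tauto
      exact ⟨h1, by omega, h3⟩
  · constructor
    · rintro ⟨h1, h2, h3⟩
      rw [hoth i h1 hik] at h2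
      exact ⟨⟨h1, h2, h3⟩, by tauto⟩
    · rintro ⟨⟨h1, h2, h3⟩, h4⟩
      rw [hoth i h1 hik]
      exact ⟨h1, h2, h3⟩

lemma sum_Zvar_ne_zero {ι : Type*} (F : Finset ι) (hF : F.Nonempty) (g : ι → ℤ) :
    (∑ c ∈ F, Zvar (g c)) ≠ 0 := by
  have h1 : (∑ c ∈ F, Zvar (g c)) =
      algebraMap (MvPolynomial ℤ ℚ) KK (∑ c ∈ F, MvPolynomial.X (g c)) := by
    rw [map_sum]; rfl
  rw [h1]
  rw [map_ne_zero_iff _ (IsFractionRing.injective (MvPolynomial ℤ ℚ) KK)]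
  intro h2
  have h3 := congrArg (MvPolynomial.eval (fun _ => (1:ℚ))) h2
  simp only [map_sum, MvPolynomial.eval_X, map_zero, Finset.sum_const, nsmul_eq_mul,
    mul_one] at h3
  have := hF.card_pos
  exact absurd h3 (by positivity)
noncomputable def boxOf (T : ℕ × ℕ → ℕ) : ℕ × ℕ := Classical.epsilon fun c => T c = 1

def dropT (T : ℕ × ℕ → ℕ) : ℕ × ℕ → ℕ := fun c => T c - 1

open Classical in
noncomputable def liftT (lam mu nu : YPartition) (T' : ℕ × ℕ → ℕ) : ℕ × ℕ → ℕ :=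
  fun c => if c ∈ skewCells lam mu then (if c ∈ skewCells lam nu then T' c + 1 else 1) else 0

noncomputable def nuOf (mu : YPartition) (T : ℕ × ℕ → ℕ) : YPartition := addBox mu (boxOf T).1

lemma mem_one_le {lam mu : YPartition} {T} (hT : T ∈ SYT lam mu) {c}
    (hc : c ∈ skewCells lam mu) : 1 ≤ T c ∧ T c ≤ (skewCells lam mu).ncard :=
  Set.mem_Icc.mp (hT.2.1.mapsTo hc)

lemma eps_unique {lam mu : YPartition} {T} (hT : T ∈ SYT lam mu) {c}
    (hc : c ∈ skewCells lam mu) {m : ℕ} (hm : T c = m) :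
    Classical.epsilon (fun d => T d = m) = c := by
  have hex : ∃ d, T d = m := ⟨c, hm⟩
  have h1 := Classical.epsilon_spec hex
  set d := Classical.epsilon fun d => T d = m with hd
  have h2 : 1 ≤ m := hm ▸ (mem_one_le hT hc).1
  have hdc : d ∈ skewCells lam mu := by
    by_contra hx
    rw [hT.1 d hx] at h1
    omega
  exact hT.2.1.injOn hdc hc (h1.trans hm.symm)

lemma contentOf_eq {lam mu : YPartition} {T} (hT : T ∈ SYT lam mu) {c}
    (hc : c ∈ skewCells lam mu) {m : ℕ} (hm : T c = m) :
    contentOf T m = (c.2 : ℤ) - (c.1 : ℤ) := by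
  unfold contentOf
  rw [eps_unique hT hc hm]

lemma boxOf_mem {lam mu : YPartition} {T} (hT : T ∈ SYT lam mu)
    (hn : 1 ≤ (skewCells lam mu).ncard) :
    boxOf T ∈ skewCells lam mu ∧ T (boxOf T) = 1 := by
  obtain ⟨c, hc, hc1⟩ := hT.2.1.surjOn (Set.mem_Icc.mpr ⟨le_rfl, hn⟩)
  have he : boxOf T = c := eps_unique hT hc hc1
  rw [he]; exact ⟨hc, hc1⟩

lemma two_le {lam mu : YPartition} {T} (hT : T ∈ SYT lam mu) {b c : ℕ × ℕ}
    (hb : b ∈ skewCells lam mu) (hb1 : T b = 1) (hc : c ∈ skewCells lam mu)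
    (hcb : c ≠ b) : 2 ≤ T c := by
  have h1 := (mem_one_le hT hc).1
  rcases Nat.lt_or_ge (T c) 2 with h | h
  · have he : T c = 1 := by omega
    exact absurd (hT.2.1.injOn hc hb (he.trans hb1.symm)) hcb
  · exact h

lemma boxOf_snd {lam mu : YPartition} {T} (hT : T ∈ SYT lam mu)
    (hn : 1 ≤ (skewCells lam mu).ncard) :
    (boxOf T).2 = mu.get (boxOf T).1 + 1 := by
  obtain ⟨hbox, h1⟩ := boxOf_mem hT hn
  obtain ⟨hk, hj1, hj2⟩ := id hbox
  by_contra hnej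
  have hcell : ((boxOf T).1, (boxOf T).2 - 1) ∈ skewCells lam mu := by
    refine ⟨hk, ?_, ?_⟩ <;> dsimp only <;> omega
  have hpos := (mem_one_le hT hcell).1
  have he : (boxOf T).2 - 1 + 1 = (boxOf T).2 := by omega
  have hlt := hT.2.2.1 (boxOf T).1 ((boxOf T).2 - 1) hcell
    (by rw [he, Prod.mk.eta]; exact hbox)
  rw [he, Prod.mk.eta, h1] at hlt
  omega

lemma boxOf_cond {lam mu : YPartition} {T} (hT : T ∈ SYT lam mu)
    (hn : 1 ≤ (skewCells lam mu).ncard) :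
    1 ≤ (boxOf T).1 ∧ ((boxOf T).1 = 1 ∨
      mu.f ((boxOf T).1 - 1) < mu.f ((boxOf T).1 - 2)) := by
  obtain ⟨hbox, h1⟩ := boxOf_mem hT hn
  obtain ⟨hk, hj1, hj2⟩ := id hbox
  refine ⟨hk, ?_⟩
  by_cases hk1 : (boxOf T).1 = 1
  · exact Or.inl hk1
  right
  have e1 : mu.f ((boxOf T).1 - 1) = mu.get (boxOf T).1 := rfl
  have e2 : mu.f ((boxOf T).1 - 2) = mu.get ((boxOf T).1 - 1) := by
    unfold YPartition.get
    rw [show (boxOf T).1 - 1 - 1 = (boxOf T).1 - 2 from by omega]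
  rw [e1, e2]
  by_contra hcon
  push_neg at hcon
  have hle : mu.get (boxOf T).1 ≤ mu.get ((boxOf T).1 - 1) := mu.get_antitone (by omega)
  have hsnd := boxOf_snd hT hn
  have hcell : ((boxOf T).1 - 1, (boxOf T).2) ∈ skewCells lam mu := by
    refine ⟨?_, ?_, ?_⟩ <;> dsimp only
    · omega
    · omega
    · calc (boxOf T).2 ≤ lam.get (boxOf T).1 := hj2
        _ ≤ lam.get ((boxOf T).1 - 1) := lam.get_antitone (by omega)
  have hpos := (mem_one_le hT hcell).1
  have he : (boxOf T).1 - 1 + 1 = (boxOf T).1 := by omega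
  have hlt := hT.2.2.2 ((boxOf T).1 - 1) (boxOf T).2 hcell
    (by rw [he, Prod.mk.eta]; exact hbox)
  rw [he, Prod.mk.eta, h1] at hlt
  omega

lemma drop_mem {lam mu nu : YPartition} {T : ℕ × ℕ → ℕ} (hT : T ∈ SYT lam mu)
    {b : ℕ × ℕ} (hb : b ∈ skewCells lam mu) (hb1 : T b = 1)
    (hcells : skewCells lam nu = skewCells lam mu \ {b}) :
    dropT T ∈ SYT lam nu := by
  have hfin := skewCells_finite lam mu
  have hn1 : 1 ≤ (skewCells lam mu).ncard := (Set.ncard_pos hfin).mpr ⟨b, hb⟩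
  have hcard : (skewCells lam nu).ncard = (skewCells lam mu).ncard - 1 := by
    rw [hcells, Set.ncard_diff_singleton_of_mem hb]
  refine ⟨?_, ⟨?_, ?_, ?_⟩, ?_, ?_⟩
  · intro c hc
    rw [hcells] at hc
    show T c - 1 = 0
    by_cases hcS : c ∈ skewCells lam mu
    · have : c = b := by
        by_contra hx
        exact hc ⟨hcS, hx⟩
      rw [this, hb1]
    · rw [hT.1 c hcS]
  · rw [hcells]
    intro c hc
    have h2 := two_le hT hb hb1 hc.1 hc.2
    have h3 := (mem_one_le hT hc.1).2
    rw [Set.mem_Icc, Set.ncard_diff_singleton_of_mem hb]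
    show 1 ≤ T c - 1 ∧ T c - 1 ≤ _
    omega
  · rw [hcells]
    intro c hc d hd he
    have h2 := two_le hT hb hb1 hc.1 hc.2
    have h3 := two_le hT hb hb1 hd.1 hd.2
    have : T c = T d := by
      have := he
      show T c = T d
      simp only [dropT] at he
      omega
    exact hT.2.1.injOn hc.1 hd.1 this
  · rw [hcells, Set.ncard_diff_singleton_of_mem hb]
    intro m hm
    rw [Set.mem_Icc] at hm
    obtain ⟨c, hc, hcm⟩ := hT.2.1.surjOn
      (Set.mem_Icc.mpr ⟨by omega, by omega⟩ : m + 1 ∈ Set.Icc 1 (skewCells lam mu).ncard)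
    have hcb : c ≠ b := by
      intro h; rw [h, hb1] at hcm; omega
    exact ⟨c, ⟨hc, hcb⟩, by show T c - 1 = m; omega⟩
  · intro i j h1 h2
    rw [hcells] at h1 h2
    have hlt := hT.2.2.1 i j h1.1 h2.1
    have hpos := (mem_one_le hT h1.1).1
    show T (i, j) - 1 < T (i, j+1) - 1
    omega
  · intro i j h1 h2
    rw [hcells] at h1 h2
    have hlt := hT.2.2.2 i j h1.1 h2.1
    have hpos := (mem_one_le hT h1.1).1
    show T (i, j) - 1 < T (i+1, j) - 1
    omega

lemma nuOf_spec {lam mu : YPartition} {T} (hsub : YPartition.Sub mu lam)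
    (hT : T ∈ SYT lam mu) (hn : 1 ≤ (skewCells lam mu).ncard) :
    YPartition.Covers mu (nuOf mu T) ∧ YPartition.Sub (nuOf mu T) lam ∧
      skewCells lam (nuOf mu T) = skewCells lam mu \ {boxOf T} := by
  have hcond := boxOf_cond hT hn
  have hbox := (boxOf_mem hT hn).1
  have hsnd := boxOf_snd hT hn
  obtain ⟨hk, hj1, hj2⟩ := id hbox
  have hget : (nuOf mu T).get (boxOf T).1 = mu.get (boxOf T).1 + 1 := by
    rw [nuOf, addBox_get hcond hcond.1, if_pos rfl]
  have hoth : ∀ i, 1 ≤ i → i ≠ (boxOf T).1 → (nuOf mu T).get i = mu.get i := by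
    intro i hi hik; rw [nuOf, addBox_get hcond hi, if_neg hik]
  refine ⟨addBox_covers hcond, ?_, ?_⟩
  · intro i hi
    by_cases hik : i = (boxOf T).1
    · subst hik; rw [hget]; omega
    · rw [hoth i hi hik]; exact hsub i hi
  · rw [skewCells_covers hcond.1 hget hoth]
    congr 1
    rw [← hsnd, Prod.mk.eta]
lemma lift_facts {lam mu nu : YPartition} (hcov : YPartition.Covers mu nu)
    (hsubnu : YPartition.Sub nu lam) :
    ∃ k, 1 ≤ k ∧ (k, mu.get k + 1) ∈ skewCells lam mu ∧
      skewCells lam nu = skewCells lam mu \ {(k, mu.get k + 1)} ∧ nu = addBox mu k ∧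
      nu.get k = mu.get k + 1 ∧ (∀ i, 1 ≤ i → i ≠ k → nu.get i = mu.get i) := by
  obtain ⟨k, hcond, hnueq, hget, hoth⟩ := covers_eq_addBox hcov
  have hb : (k, mu.get k + 1) ∈ skewCells lam mu := by
    refine ⟨hcond.1, ?_, ?_⟩ <;> dsimp only
    · omega
    · have := hsubnu k hcond.1
      omega
  exact ⟨k, hcond.1, hb, skewCells_covers hcond.1 hget hoth, hnueq, hget, hoth⟩

lemma lift_mem {lam mu nu : YPartition} (hcov : YPartition.Covers mu nu)
    (hsubnu : YPartition.Sub nu lam) {T' : ℕ × ℕ → ℕ} (hT' : T' ∈ SYT lam nu) :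
    liftT lam mu nu T' ∈ SYT lam mu := by
  classical
  obtain ⟨k, hk1, hb, hcells, hnueq, hget, hoth⟩ := lift_facts hcov hsubnu
  have hfin := skewCells_finite lam mu
  have hcard : (skewCells lam nu).ncard = (skewCells lam mu).ncard - 1 := by
    rw [hcells, Set.ncard_diff_singleton_of_mem hb]
  have hn1 : 1 ≤ (skewCells lam mu).ncard := (Set.ncard_pos hfin).mpr ⟨_, hb⟩
  have hmem : ∀ c ∈ skewCells lam mu, c ≠ (k, mu.get k + 1) → c ∈ skewCells lam nu := by
    intro c hc hcb; rw [hcells]; exact ⟨hc, hcb⟩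
  have hbnu : (k, mu.get k + 1) ∉ skewCells lam nu := by
    rw [hcells]; exact fun h => h.2 rfl
  have hLb : liftT lam mu nu T' (k, mu.get k + 1) = 1 := by
    simp only [liftT]; rw [if_pos hb, if_neg hbnu]
  have hLc : ∀ c ∈ skewCells lam nu, liftT lam mu nu T' c = T' c + 1 := by
    intro c hc
    have hcS : c ∈ skewCells lam mu := (hcells ▸ hc).1
    simp only [liftT]; rw [if_pos hcS, if_pos hc]
  have hval : ∀ c ∈ skewCells lam nu,
      1 ≤ T' c ∧ T' c ≤ (skewCells lam mu).ncard - 1 := by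
    intro c hc
    have := mem_one_le hT' hc
    rw [hcard] at this
    exact this
  refine ⟨?_, ⟨?_, ?_, ?_⟩, ?_, ?_⟩
  · intro c hc
    simp only [liftT]; rw [if_neg hc]
  · intro c hc
    rw [Set.mem_Icc]
    by_cases hcb : c = (k, mu.get k + 1)
    · rw [hcb, hLb]; omega
    · have hcnu := hmem c hc hcb
      rw [hLc c hcnu]
      have := hval c hcnu
      omega
  · intro c hc d hd he
    by_cases hcb : c = (k, mu.get k + 1) <;> by_cases hdb : d = (k, mu.get k + 1)
    · rw [hcb, hdb]
    · have hdnu := hmem d hd hdb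
      rw [hcb, hLb, hLc d hdnu] at he
      have := (hval d hdnu).1
      omega
    · have hcnu := hmem c hc hcb
      rw [hdb, hLb, hLc c hcnu] at he
      have := (hval c hcnu).1
      omega
    · have hcnu := hmem c hc hcb
      have hdnu := hmem d hd hdb
      rw [hLc c hcnu, hLc d hdnu] at he
      exact hT'.2.1.injOn hcnu hdnu (by omega)
  · intro m hm
    rw [Set.mem_Icc] at hm
    by_cases hm1 : m = 1
    · exact ⟨(k, mu.get k + 1), hb, by rw [hLb, hm1]⟩
    · obtain ⟨c, hc, hcm⟩ := hT'.2.1.surjOn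
        (Set.mem_Icc.mpr ⟨by omega, by rw [hcard]; omega⟩ :
          m - 1 ∈ Set.Icc 1 (skewCells lam nu).ncard)
      refine ⟨c, (hcells ▸ hc).1, ?_⟩
      rw [hLc c hc, hcm]
      omega
  · intro i j h1 h2
    by_cases hb1 : (i, j) = (k, mu.get k + 1) <;>
      by_cases hb2 : (i, j+1) = (k, mu.get k + 1)
    · rw [Prod.mk.injEq] at hb1 hb2
      omega
    · have h2nu := hmem _ h2 hb2
      rw [hb1, hLb, hLc _ h2nu]
      have := (hval _ h2nu).1
      omega
    · exfalso
      rw [Prod.mk.injEq] at hb2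
      obtain ⟨heq, hj2⟩ := hb2
      subst heq
      obtain ⟨-, hj1, -⟩ := h1
      dsimp only at hj1
      omega
    · have h1nu := hmem _ h1 hb1
      have h2nu := hmem _ h2 hb2
      rw [hLc _ h1nu, hLc _ h2nu]
      have := hT'.2.2.1 i j h1nu h2nu
      omega
  · intro i j h1 h2
    by_cases hb1 : (i, j) = (k, mu.get k + 1) <;>
      by_cases hb2 : (i+1, j) = (k, mu.get k + 1)
    · rw [Prod.mk.injEq] at hb1 hb2
      omega
    · have h2nu := hmem _ h2 hb2
      rw [hb1, hLb, hLc _ h2nu]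
      have := (hval _ h2nu).1
      omega
    · exfalso
      rw [Prod.mk.injEq] at hb2
      obtain ⟨hi1, hj1, -⟩ := h1
      dsimp only at hi1 hj1
      have hik : i ≠ k := by omega
      have he1 : nu.get i = mu.get i := hoth i hi1 hik
      have ha : nu.get k ≤ nu.get i := nu.get_antitone (by omega)
      omega
    · have h1nu := hmem _ h1 hb1
      have h2nu := hmem _ h2 hb2
      rw [hLc _ h1nu, hLc _ h2nu]
      have := hT'.2.2.2 i j h1nu h2nu
      omega

lemma drop_lift {lam mu nu : YPartition} (hcov : YPartition.Covers mu nu)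
    (hsubnu : YPartition.Sub nu lam) {T' : ℕ × ℕ → ℕ} (hT' : T' ∈ SYT lam nu) :
    dropT (liftT lam mu nu T') = T' := by
  classical
  funext c
  show liftT lam mu nu T' c - 1 = T' c
  by_cases hc : c ∈ skewCells lam nu
  · have hcS : c ∈ skewCells lam mu := by
      obtain ⟨k0, h1, h2, hcells, h4, h5, h6⟩ := lift_facts hcov hsubnu
      exact (hcells ▸ hc).1
    simp only [liftT]; rw [if_pos hcS, if_pos hc]
    omega
  · rw [hT'.1 c hc]; simp only [liftT]
    by_cases hcS : c ∈ skewCells lam mu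
    · rw [if_pos hcS, if_neg hc]
    · rw [if_neg hcS]

lemma nuOf_lift {lam mu nu : YPartition} (hcov : YPartition.Covers mu nu)
    (hsubnu : YPartition.Sub nu lam) {T' : ℕ × ℕ → ℕ} (hT' : T' ∈ SYT lam nu) :
    nuOf mu (liftT lam mu nu T') = nu := by
  obtain ⟨k, hk1, hb, hcells, hnueq, hget, hoth⟩ := lift_facts hcov hsubnu
  have hL := lift_mem hcov hsubnu hT'
  have hbnu : (k, mu.get k + 1) ∉ skewCells lam nu := by
    rw [hcells]; exact fun h => h.2 rfl
  have hLb : liftT lam mu nu T' (k, mu.get k + 1) = 1 := by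
    simp only [liftT]; rw [if_pos hb, if_neg hbnu]
  have hbox : boxOf (liftT lam mu nu T') = (k, mu.get k + 1) :=
    eps_unique hL hb hLb
  rw [nuOf, hbox, ← hnueq]

lemma lift_drop {lam mu : YPartition} (hsub : YPartition.Sub mu lam) {T : ℕ × ℕ → ℕ}
    (hT : T ∈ SYT lam mu) (hn : 1 ≤ (skewCells lam mu).ncard) :
    liftT lam mu (nuOf mu T) (dropT T) = T := by
  classical
  obtain ⟨-, -, hcells⟩ := nuOf_spec hsub hT hn
  obtain ⟨hbS, hb1⟩ := boxOf_mem hT hn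
  funext c
  simp only [liftT]
  by_cases hcS : c ∈ skewCells lam mu
  · rw [if_pos hcS]
    by_cases hcb : c = boxOf T
    · rw [if_neg (by rw [hcells, hcb]; exact fun h => h.2 rfl), hcb, hb1]
    · have hcnu : c ∈ skewCells lam (nuOf mu T) := by rw [hcells]; exact ⟨hcS, hcb⟩
      rw [if_pos hcnu]
      have h2 := two_le hT hbS hb1 hcS hcb
      show T c - 1 + 1 = T c
      omega
  · rw [if_neg hcS, hT.1 c hcS]
lemma weight {lam mu nu : YPartition} {T : ℕ × ℕ → ℕ} (hT : T ∈ SYT lam mu)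
    {b : ℕ × ℕ} (hb : b ∈ skewCells lam mu) (hb1 : T b = 1)
    (hcells : skewCells lam nu = skewCells lam mu \ {b}) :
    zT lam nu (dropT T) =
      (∑ c ∈ (skewCells_finite lam mu).toFinset, Zvar ((c.2 : ℤ) - (c.1 : ℤ))) *
        zT lam mu T := by
  have hfin := skewCells_finite lam mu
  set n := (skewCells lam mu).ncard with hndef
  have hn1 : 1 ≤ n := (Set.ncard_pos hfin).mpr ⟨b, hb⟩
  have hcard : (skewCells lam nu).ncard = n - 1 := by
    rw [hcells, Set.ncard_diff_singleton_of_mem hb]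
  have hT' : dropT T ∈ SYT lam nu := drop_mem hT hb hb1 hcells
  have hshift : ∀ l, 1 ≤ l → l ≤ n - 1 →
      contentOf (dropT T) l = contentOf T (l+1) := by
    intro l h1 h2
    obtain ⟨c, hc, hcl⟩ := hT.2.1.surjOn
      (Set.mem_Icc.mpr ⟨by omega, by omega⟩ : l + 1 ∈ Set.Icc 1 n)
    have hcb : c ≠ b := fun h => by rw [h, hb1] at hcl; omega
    have hcnu : c ∈ skewCells lam nu := by rw [hcells]; exact ⟨hc, hcb⟩
    have hdl : dropT T c = l := by show T c - 1 = l; omega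
    rw [contentOf_eq hT' hcnu hdl, contentOf_eq hT hc hcl]
  have hH : (∑ c ∈ hfin.toFinset, Zvar ((c.2 : ℤ) - (c.1 : ℤ))) =
      ∑ l ∈ Finset.Icc 1 n, Zvar (contentOf T l) := by
    refine Finset.sum_bij (fun c _ => T c) ?_ ?_ ?_ ?_
    · intro c hc
      rw [hfin.mem_toFinset] at hc
      have h2 := mem_one_le hT hc
      simp only [Finset.mem_Icc]
      omega
    · intro c hc d hd he
      rw [hfin.mem_toFinset] at hc hd
      exact hT.2.1.injOn hc hd he
    · intro m hm
      rw [Finset.mem_Icc] at hm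
      obtain ⟨c, hc, hcm⟩ := hT.2.1.surjOn (Set.mem_Icc.mpr hm : m ∈ Set.Icc 1 n)
      exact ⟨c, hfin.mem_toFinset.mpr hc, hcm⟩
    · intro c hc
      rw [hfin.mem_toFinset] at hc
      rw [contentOf_eq hT hc rfl]
  have hA : (∑ l ∈ Finset.Icc 1 n, Zvar (contentOf T l)) ≠ 0 := by
    rw [← hH]
    exact sum_Zvar_ne_zero _ ⟨b, hfin.mem_toFinset.mpr hb⟩ _
  have hins : Finset.Icc 1 n = insert 1 (Finset.Icc 2 n) := by
    ext x
    simp only [Finset.mem_Icc, Finset.mem_insert]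
    omega
  have hsplit : (∏ k ∈ Finset.Icc 1 n, ∑ l ∈ Finset.Icc k n, Zvar (contentOf T l))
      = (∑ l ∈ Finset.Icc 1 n, Zvar (contentOf T l)) *
        ∏ k ∈ Finset.Icc 2 n, ∑ l ∈ Finset.Icc k n, Zvar (contentOf T l) := by
    conv_lhs => rw [hins]
    rw [Finset.prod_insert (by simp [Finset.mem_Icc])]
  have hprod : (∏ k ∈ Finset.Icc 1 (n-1),
        ∑ l ∈ Finset.Icc k (n-1), Zvar (contentOf (dropT T) l))
      = ∏ k ∈ Finset.Icc 2 n, ∑ l ∈ Finset.Icc k n, Zvar (contentOf T l) := by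
    refine Finset.prod_nbij' (fun k => k + 1) (fun k => k - 1) ?_ ?_ ?_ ?_ ?_
    · intro a ha; simp only [Finset.mem_Icc] at *; omega
    · intro a ha; simp only [Finset.mem_Icc] at *; omega
    · intro a ha; omega
    · intro a ha; simp only [Finset.mem_Icc] at ha; omega
    · intro a ha
      simp only [Finset.mem_Icc] at ha
      refine Finset.sum_nbij' (fun l => l + 1) (fun l => l - 1) ?_ ?_ ?_ ?_ ?_
      · intro l hl; simp only [Finset.mem_Icc] at *; omega
      · intro l hl; simp only [Finset.mem_Icc] at *; omega
      · intro l hl; omega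
      · intro l hl; simp only [Finset.mem_Icc] at hl; omega
      · intro l hl
        simp only [Finset.mem_Icc] at hl
        rw [hshift l (by omega) (by omega)]
  show (∏ k ∈ Finset.Icc 1 (skewCells lam nu).ncard,
      ∑ l ∈ Finset.Icc k (skewCells lam nu).ncard, Zvar (contentOf (dropT T) l))⁻¹ = _
  rw [hcard, hprod, hH]
  show _ = (∑ l ∈ Finset.Icc 1 n, Zvar (contentOf T l)) *
    (∏ k ∈ Finset.Icc 1 n, ∑ l ∈ Finset.Icc k n, Zvar (contentOf T l))⁻¹
  rw [hsplit, mul_inv, ← mul_assoc, mul_inv_cancel₀ hA, one_mul]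
/-- For a skew partition `λ/μ` with `λ ≠ μ`, one has
`Σ_{T ∈ SYT(λ/μ)} z_T = (Σ_{(i,j) ∈ Y(λ/μ)} z_{j−i})⁻¹ ·
Σ_{ν : μ ⋖ ν ⊆ λ} Σ_{T ∈ SYT(λ/ν)} z_T`. -/
theorem zT_sum_recursion (lam mu : YPartition) (hsub : YPartition.Sub mu lam)
    (hne : lam ≠ mu) :
    (∑ᶠ T ∈ SYT lam mu, zT lam mu T) =
      (∑ᶠ c ∈ skewCells lam mu, Zvar ((c.2 : ℤ) - (c.1 : ℤ)))⁻¹ *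
        ∑ᶠ nu ∈ {nu : YPartition | YPartition.Covers mu nu ∧ YPartition.Sub nu lam},
          ∑ᶠ T ∈ SYT lam nu, zT lam nu T := by
  classical
  have hSfin := skewCells_finite lam mu
  have hSne := exists_cell lam mu hsub hne
  have hn : 1 ≤ (skewCells lam mu).ncard := (Set.ncard_pos hSfin).mpr hSne
  have hCfin := covers_finite lam mu
  have hTfin := SYT_finite lam mu
  obtain ⟨b0, hb0⟩ := hSne
  set H := ∑ c ∈ hSfin.toFinset, Zvar ((c.2 : ℤ) - (c.1 : ℤ)) with hHdef
  have hHne : H ≠ 0 :=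
    sum_Zvar_ne_zero _ ⟨b0, hSfin.mem_toFinset.mpr hb0⟩ _
  have key : ∑ T ∈ hTfin.toFinset, H * zT lam mu T =
      ∑ p ∈ hCfin.toFinset.sigma (fun nu => (SYT_finite lam nu).toFinset),
        zT lam p.1 p.2 := by
    refine Finset.sum_nbij' (fun T => ⟨nuOf mu T, dropT T⟩)
      (fun p => liftT lam mu p.1 p.2) ?_ ?_ ?_ ?_ ?_
    · intro T hT
      rw [hTfin.mem_toFinset] at hT
      obtain ⟨hcov, hsubnu, hcells⟩ := nuOf_spec hsub hT hn
      obtain ⟨hbS, hb1⟩ := boxOf_mem hT hn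
      rw [Finset.mem_sigma, hCfin.mem_toFinset, (SYT_finite lam _).mem_toFinset]
      exact ⟨⟨hcov, hsubnu⟩, drop_mem hT hbS hb1 hcells⟩
    · intro p hp
      rw [Finset.mem_sigma, hCfin.mem_toFinset, (SYT_finite lam _).mem_toFinset] at hp
      rw [hTfin.mem_toFinset]
      exact lift_mem hp.1.1 hp.1.2 hp.2
    · intro T hT
      rw [hTfin.mem_toFinset] at hT
      exact lift_drop hsub hT hn
    · intro p hp
      rw [Finset.mem_sigma, hCfin.mem_toFinset, (SYT_finite lam _).mem_toFinset] at hp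
      obtain ⟨⟨hcov, hsubnu⟩, hT'⟩ := hp
      refine Sigma.ext ?_ ?_ <;> simp only
      · exact nuOf_lift hcov hsubnu hT'
      · exact heq_of_eq (drop_lift hcov hsubnu hT')
    · intro T hT
      rw [hTfin.mem_toFinset] at hT
      obtain ⟨hcov, hsubnu, hcells⟩ := nuOf_spec hsub hT hn
      obtain ⟨hbS, hb1⟩ := boxOf_mem hT hn
      exact (weight hT hbS hb1 hcells).symm
  have eL : (∑ᶠ T ∈ SYT lam mu, zT lam mu T) = ∑ T ∈ hTfin.toFinset, zT lam mu T :=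
    finsum_mem_eq_finite_toFinset_sum _ hTfin
  have eS : (∑ᶠ c ∈ skewCells lam mu, Zvar ((c.2 : ℤ) - (c.1 : ℤ))) = H := by
    exact finsum_mem_eq_finite_toFinset_sum _ hSfin
  have eC : (∑ᶠ nu ∈ {nu : YPartition | YPartition.Covers mu nu ∧ YPartition.Sub nu lam},
        ∑ᶠ T ∈ SYT lam nu, zT lam nu T) =
      ∑ nu ∈ hCfin.toFinset, ∑ T ∈ (SYT_finite lam nu).toFinset, zT lam nu T := by
    rw [finsum_mem_eq_finite_toFinset_sum _ hCfin]
    refine Finset.sum_congr rfl fun nu _ => ?_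
    exact finsum_mem_eq_finite_toFinset_sum _ (SYT_finite lam nu)
  rw [eL, eS, eC, Finset.sum_sigma' hCfin.toFinset
    (fun nu => (SYT_finite lam nu).toFinset) (fun nu T => zT lam nu T), ← key,
    ← Finset.mul_sum, inv_mul_cancel_left₀ hHne]
end

section
/- Let λ and μ be two partitions. Then, in ℤ[x_1, x_2, …, y_1, y_2, …], one has s_λ[μ] = Σ_{T ∈ F(λ/μ)} ∏_{(i,j) ∈ Y(μ)} (x_{T(i,j)} + y_{T(i,j)+j−i}). -/
section Aux

open Classical in
noncomputable instance : DecidableEq (ℕ × ℕ) := inferInstance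

namespace Aux

lemma get_antitone (p : YPartition) {i j : ℕ} (h : i ≤ j) : p.get j ≤ p.get i :=
  p.antitone' (Nat.sub_le_sub_right h 1)

lemma mem_cells {p : YPartition} {c : ℕ × ℕ} :
    c ∈ cells p ↔ 1 ≤ c.1 ∧ 1 ≤ c.2 ∧ c.2 ≤ p.get c.1 := by
  simp only [cells, skewCells, Set.mem_setOf_eq, YPartition.empty, YPartition.get]
  omega

lemma cells_mono {p : YPartition} {i j i' j' : ℕ} (h : (i, j) ∈ cells p)
    (h1 : 1 ≤ i') (h2 : 1 ≤ j') (h3 : i' ≤ i) (h4 : j' ≤ j) : (i', j') ∈ cells p := by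
  rw [mem_cells] at h ⊢
  exact ⟨h1, h2, le_trans h4 (le_trans h.2.2 (get_antitone p h3))⟩

lemma cells_finite (p : YPartition) : (cells p).Finite := by
  obtain ⟨N, hN⟩ := p.eventually_zero'
  apply Set.Finite.subset (Set.finite_Icc ((1 : ℕ), (1 : ℕ)) (N + 1, p.get 1))
  intro c hc
  rw [mem_cells] at hc
  have h1 : c.2 ≤ p.get c.1 := hc.2.2
  have h2 : p.get c.1 ≤ p.get 1 := get_antitone p hc.1
  have h3 : c.1 ≤ N + 1 := by
    by_contra h
    have : p.get c.1 = 0 := hN (c.1 - 1) (by omega)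
    omega
  simp only [Set.mem_Icc, Prod.le_def]
  omega

/-- The box map `c ↦ (T c, T c + c.2 - c.1)`. -/
def boxMap (T : ℕ × ℕ → ℕ) (c : ℕ × ℕ) : ℕ × ℕ := (T c, T c + c.2 - c.1)

lemma excitedDiagram_eq (mu : YPartition) (T : ℕ × ℕ → ℕ) :
    excitedDiagram mu T = boxMap T '' cells mu := rfl

variable {mu : YPartition} {T : ℕ × ℕ → ℕ}

lemma row_le (hT : T ∈ SSYT mu) : ∀ i j : ℕ, (i, j) ∈ cells mu → i ≤ T (i, j) := by
  intro i
  induction i with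
  | zero => intro j hj; omega
  | succ n ih =>
    intro j hj
    rcases Nat.eq_zero_or_pos n with hn | hn
    · subst hn; exact hT.2.1 _ hj
    · have h1 : (n, j) ∈ cells mu := by
        rw [mem_cells] at hj ⊢
        exact ⟨hn, hj.2.1, le_trans hj.2.2 (get_antitone mu (by omega))⟩
      have := hT.2.2.2 n j h1 hj
      have := ih j h1
      omega

lemma row_mono (hT : T ∈ SSYT mu) {i j j' : ℕ} (hc : (i, j) ∈ cells mu)
    (hc' : (i, j') ∈ cells mu) (h : j ≤ j') : T (i, j) ≤ T (i, j') := by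
  obtain ⟨t, rfl⟩ := Nat.exists_eq_add_of_le h
  clear h
  induction t with
  | zero => simp
  | succ m ih =>
    have hm : (i, j + m) ∈ cells mu :=
      cells_mono hc' (by rw [mem_cells] at hc; omega)
        (by rw [mem_cells] at hc; omega) le_rfl (by omega)
    have hs : (i, j + m + 1) ∈ cells mu := by
      rw [show j + m + 1 = j + (m + 1) by ring]; exact hc'
    have h2 := hT.2.2.1 i (j + m) hm hs
    have h3 := ih hm
    calc T (i, j) ≤ T (i, j + m) := h3
    _ ≤ T (i, j + m + 1) := h2
    _ = T (i, j + (m + 1)) := by rw [show j + m + 1 = j + (m + 1) by ring]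

lemma col_strict (hT : T ∈ SSYT mu) {i j : ℕ} (t : ℕ) (hc : (i, j) ∈ cells mu)
    (hc' : (i + t, j) ∈ cells mu) : T (i, j) + t ≤ T (i + t, j) := by
  induction t with
  | zero => simp
  | succ m ih =>
    have hs : (i + m + 1, j) ∈ cells mu := by
      rw [show i + m + 1 = i + (m + 1) by ring]; exact hc'
    have hm : (i + m, j) ∈ cells mu :=
      cells_mono hs (by rw [mem_cells] at hc; omega)
        (by rw [mem_cells] at hc; omega) (by omega) le_rfl
    have h2 := hT.2.2.2 (i + m) j hm hs
    have h3 := ih hm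
    have h4 : T (i + m + 1, j) = T (i + (m + 1), j) := by
      rw [show i + m + 1 = i + (m + 1) by ring]
    omega

/-- The fundamental monotonicity: entries strictly grow down-right. -/
lemma dominate (hT : T ∈ SSYT mu) {i j i' j' : ℕ} (hc : (i, j) ∈ cells mu)
    (hc' : (i', j') ∈ cells mu) (h1 : i ≤ i') (h2 : j ≤ j') :
    T (i, j) + (i' - i) ≤ T (i', j') := by
  have hmid : (i, j') ∈ cells mu := by
    rw [mem_cells] at hc hc' ⊢
    exact ⟨hc.1, hc'.2.1, le_trans hc'.2.2 (get_antitone mu h1)⟩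
  have hr := row_mono hT hc hmid h2
  have hcst := col_strict hT (i' - i) hmid
    (by rw [Nat.add_sub_cancel' h1]; exact hc')
  rw [Nat.add_sub_cancel' h1] at hcst
  omega

lemma boxMap_injOn (hT : T ∈ SSYT mu) : Set.InjOn (boxMap T) (cells mu) := by
  rintro ⟨i, j⟩ hc ⟨i', j'⟩ hc' heq
  have hle := row_le hT i j hc
  have hle' := row_le hT i' j' hc'
  simp only [boxMap, Prod.mk.injEq] at heq
  obtain ⟨h1, h2⟩ := heq
  have hcont : j + i' = j' + i := by omega
  rcases Nat.lt_trichotomy i i' with h | h | h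
  · have := dominate hT hc hc' (by omega) (by omega)
    omega
  · subst h
    simp only [Prod.mk.injEq]
    exact ⟨trivial, by omega⟩
  · have := dominate hT hc' hc (by omega) (by omega)
    omega

lemma mem_excitedDiagram (hT : T ∈ SSYT mu) {x : ℕ × ℕ} :
    x ∈ excitedDiagram mu T ↔ ∃ c ∈ cells mu, T c = x.1 ∧ T c + c.2 = x.2 + c.1 := by
  rw [excitedDiagram_eq]
  constructor
  · rintro ⟨⟨i, j⟩, hc, rfl⟩
    have := row_le hT i j hc
    refine ⟨(i, j), hc, rfl, ?_⟩
    simp only [boxMap]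
    omega
  · rintro ⟨⟨i, j⟩, hc, h1, h2⟩
    have := row_le hT i j hc
    refine ⟨(i, j), hc, ?_⟩
    simp only [boxMap, Prod.ext_iff] at h1 h2 ⊢
    omega

lemma boxMap_mem (hT : T ∈ SSYT mu) {c : ℕ × ℕ} (hc : c ∈ cells mu) :
    boxMap T c ∈ excitedDiagram mu T := ⟨c, hc, rfl⟩

end Aux
end Aux

namespace Aux

variable {mu : YPartition} {T : ℕ × ℕ → ℕ}

lemma diagram_eq_cells (hT : T ∈ SSYT mu) (h : ∀ c ∈ cells mu, T c = c.1) :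
    excitedDiagram mu T = cells mu := by
  ext x
  rw [mem_excitedDiagram hT]
  constructor
  · rintro ⟨⟨i, j⟩, hc, h1, h2⟩
    have := h _ hc
    have hx : x = (i, j) := by
      rw [Prod.ext_iff]; simp only at this ⊢; omega
    rwa [hx]
  · intro hx
    refine ⟨x, hx, by rw [h _ hx], by rw [h _ hx]; ring⟩

set_option maxHeartbeats 1000000 in
lemma exists_lex_min (S : Finset (ℕ × ℕ)) (h : S.Nonempty) :
    ∃ p ∈ S, ∀ c ∈ S, p.1 < c.1 ∨ (p.1 = c.1 ∧ p.2 ≤ c.2) := by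
  have h1 : (S.image Prod.fst).Nonempty := h.image _
  set i₁ := (S.image Prod.fst).min' h1 with hi₁
  have h2 : (((S.filter fun c => c.1 = i₁)).image Prod.snd).Nonempty := by
    obtain ⟨c, hc, hceq⟩ := Finset.mem_image.mp ((S.image Prod.fst).min'_mem h1)
    exact ⟨c.2, Finset.mem_image.mpr ⟨c, Finset.mem_filter.mpr ⟨hc, hceq⟩, rfl⟩⟩
  set j₁ := (((S.filter fun c => c.1 = i₁)).image Prod.snd).min' h2 with hj₁
  obtain ⟨c, hc, hceq⟩ := Finset.mem_image.mp
    ((((S.filter fun c => c.1 = i₁)).image Prod.snd).min'_mem h2)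
  have hc' := Finset.mem_filter.mp hc
  refine ⟨c, hc'.1, fun d hd => ?_⟩
  have hd1 : i₁ ≤ d.1 := Finset.min'_le _ _ (Finset.mem_image.mpr ⟨d, hd, rfl⟩)
  rcases eq_or_ne c.1 d.1 with heq | hne
  · refine Or.inr ⟨heq, ?_⟩
    have : d.2 ∈ ((S.filter fun c => c.1 = i₁)).image Prod.snd :=
      Finset.mem_image.mpr ⟨d, Finset.mem_filter.mpr ⟨hd, by omega⟩, rfl⟩
    have := Finset.min'_le _ _ this
    omega
  · left
    have := hc'.2
    omega

lemma excitation_of_ssyt_aux :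
    ∀ n (T : ℕ × ℕ → ℕ), T ∈ SSYT mu →
      (∑ c ∈ (cells_finite mu).toFinset, (T c - c.1)) = n →
      IsExcitation (cells mu) (excitedDiagram mu T) := by
  intro n
  induction n using Nat.strong_induction_on with
  | _ n IH =>
    intro T hT hsum
    rcases Nat.eq_zero_or_pos n with h0 | hpos
    · -- base case: T c = c.1 everywhere
      subst h0
      have hz : ∀ c ∈ (cells_finite mu).toFinset, T c - c.1 = 0 :=
        (Finset.sum_eq_zero_iff).mp hsum
      have h : ∀ c ∈ cells mu, T c = c.1 := by
        rintro ⟨i, j⟩ hc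
        have h1 := row_le hT i j hc
        have h2 := hz (i, j) ((cells_finite mu).mem_toFinset.mpr hc)
        simp only at h1 h2 ⊢
        omega
      rw [diagram_eq_cells hT h]
      exact Relation.ReflTransGen.refl
    · -- inductive step
      classical
      have hSne : (((cells_finite mu).toFinset).filter fun c => c.1 < T c).Nonempty := by
        by_contra hne
        rw [Finset.not_nonempty_iff_eq_empty, Finset.filter_eq_empty_iff] at hne
        have : ∑ c ∈ (cells_finite mu).toFinset, (T c - c.1) = 0 :=
          Finset.sum_eq_zero fun c hc => by have := hne hc; omega
        omega
      obtain ⟨⟨i₀, j₀⟩, hmemS, hlex⟩ := exists_lex_min _ hSne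
      have hc₀ : (i₀, j₀) ∈ cells mu :=
        (cells_finite mu).mem_toFinset.mp (Finset.mem_filter.mp hmemS).1
      have hk : i₀ < T (i₀, j₀) := (Finset.mem_filter.mp hmemS).2
      obtain ⟨k, hkdef⟩ : ∃ k, T (i₀, j₀) = k := ⟨_, rfl⟩
      rw [hkdef] at hk
      -- minimality
      have hmin : ∀ i j, (i, j) ∈ cells mu →
          (i < i₀ ∨ (i = i₀ ∧ j < j₀)) → T (i, j) = i := by
        intro i j hc hcase
        have h1 := row_le hT i j hc
        by_contra hne
        have hmem : (i, j) ∈ ((cells_finite mu).toFinset).filter fun c => c.1 < T c :=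
          Finset.mem_filter.mpr ⟨(cells_finite mu).mem_toFinset.mpr hc, by omega⟩
        have := hlex (i, j) hmem
        simp only at this
        omega
      have hi₀1 : 1 ≤ i₀ := (mem_cells.mp hc₀).1
      have hj₀1 : 1 ≤ j₀ := (mem_cells.mp hc₀).2.1
      -- the decremented tableau
      set T' := Function.update T (i₀, j₀) (k - 1) with hT'def
      have hT'at : T' (i₀, j₀) = k - 1 := Function.update_self _ _ _
      have hT'ne : ∀ c : ℕ × ℕ, c ≠ (i₀, j₀) → T' c = T c :=
        fun c hc => Function.update_of_ne hc _ _
      -- T' is SSYT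
      have hT' : T' ∈ SSYT mu := by
        refine ⟨?_, ?_, ?_, ?_⟩
        · intro c hc
          rw [hT'ne c (fun h => hc (h ▸ hc₀))]
          exact hT.1 c hc
        · intro c hc
          rcases eq_or_ne c (i₀, j₀) with rfl | h
          · rw [hT'at]; omega
          · rw [hT'ne c h]; exact hT.2.1 c hc
        · intro i j hc1 hc2
          have hrow := hT.2.2.1 i j hc1 hc2
          rcases eq_or_ne (i, j) (i₀, j₀) with heq | h
          · have hie : i = i₀ := congrArg Prod.fst heq
            have hje : j = j₀ := congrArg Prod.snd heq
            rw [heq, hT'at, hT'ne (i, j + 1)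
              (fun hh => by have := congrArg Prod.snd hh; simp only at this; omega)]
            have hkk : T (i, j) = k := by rw [hie, hje]; exact hkdef
            omega
          · rw [hT'ne (i, j) h]
            rcases eq_or_ne (i, j + 1) (i₀, j₀) with heq | h2
            · have hie : i = i₀ := congrArg Prod.fst heq
              have hje : j + 1 = j₀ := congrArg Prod.snd heq
              rw [heq, hT'at]
              have hji : T (i, j) = i := hmin i j hc1 (by omega)
              omega
            · rw [hT'ne (i, j + 1) h2]
              exact hrow
        · intro i j hc1 hc2
          have hcol := hT.2.2.2 i j hc1 hc2
          rcases eq_or_ne (i, j) (i₀, j₀) with heq | h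
          · have hie : i = i₀ := congrArg Prod.fst heq
            have hje : j = j₀ := congrArg Prod.snd heq
            rw [heq, hT'at, hT'ne (i + 1, j)
              (fun hh => by have := congrArg Prod.fst hh; simp only at this; omega)]
            have hkk : T (i, j) = k := by rw [hie, hje]; exact hkdef
            omega
          · rw [hT'ne (i, j) h]
            rcases eq_or_ne (i + 1, j) (i₀, j₀) with heq | h2
            · have hie : i + 1 = i₀ := congrArg Prod.fst heq
              have hje : j = j₀ := congrArg Prod.snd heq
              rw [heq, hT'at]
              have hji : T (i, j) = i := hmin i j hc1 (by omega)
              omega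
            · rw [hT'ne (i + 1, j) h2]
              exact hcol
      -- new sum
      have hmemF : (i₀, j₀) ∈ (cells_finite mu).toFinset := (Finset.mem_filter.mp hmemS).1
      have hsum' : (∑ c ∈ (cells_finite mu).toFinset, (T' c - c.1)) = n - 1 := by
        have hfun : ∀ c ∈ (cells_finite mu).toFinset, T' c - c.1 =
            Function.update (fun c : ℕ × ℕ => T c - c.1) (i₀, j₀) (k - 1 - i₀) c := by
          intro c _
          rcases eq_or_ne c (i₀, j₀) with rfl | h
          · rw [hT'at, Function.update_self]
          · rw [hT'ne c h, Function.update_of_ne h]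
        rw [Finset.sum_congr rfl hfun, Finset.sum_update_of_mem hmemF]
        have := Finset.sum_eq_sum_sdiff_singleton_add hmemF (fun c : ℕ × ℕ => T c - c.1)
        rw [this] at hsum
        omega
      -- the move
      have hIH := IH (n - 1) (by omega) T' hT' hsum'
      refine Relation.ReflTransGen.tail hIH ?_
      refine ⟨k - 1, k - 1 + j₀ - i₀, ?_, ?_, ?_, ?_, ?_⟩
      · -- (k-1, b) ∈ D(T')
        have := boxMap_mem hT' hc₀
        have hbox : boxMap T' (i₀, j₀) = (k - 1, k - 1 + j₀ - i₀) := by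
          simp only [boxMap, hT'at]
        rwa [hbox] at this
      · -- (k, b) ∉ D(T')
        rw [mem_excitedDiagram hT']
        rintro ⟨⟨i, j⟩, hc, h1, h2⟩
        simp only at h1 h2
        have hcne : (i, j) ≠ (i₀, j₀) := by
          intro h; rw [h, hT'at] at h1; omega
        rw [hT'ne _ hcne] at h1 h2
        have hle := row_le hT i j hc
        -- h1 : T (i,j) = k, h2 : T (i,j) + j = (k-1+j₀-i₀) + i
        rcases Nat.lt_trichotomy i i₀ with hlt | heq | hgt
        · have := hmin i j hc (Or.inl hlt); omega
        · subst heq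
          have hj : j = j₀ - 1 := by omega
          have := hmin i j hc (Or.inr ⟨rfl, by omega⟩)
          omega
        · have hji : j₀ ≤ j := by omega
          have := dominate hT hc₀ hc (by omega) hji
          omega
      · -- (k-1, b+1) ∉ D(T')
        rw [mem_excitedDiagram hT']
        rintro ⟨⟨i, j⟩, hc, h1, h2⟩
        simp only at h1 h2
        rcases eq_or_ne (i, j) (i₀, j₀) with heq | hcne
        · rw [Prod.ext_iff] at heq; simp only at heq
          obtain ⟨rfl, rfl⟩ := heq
          rw [hT'at] at h1 h2
          omega
        · rw [hT'ne _ hcne] at h1 h2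
          have hle := row_le hT i j hc
          rcases Nat.lt_trichotomy i i₀ with hlt | heq | hgt
          · have := hmin i j hc (Or.inl hlt); omega
          · subst heq
            have hj : j = j₀ + 1 := by omega
            subst hj
            have hrow := row_mono hT hc₀ hc (by omega)
            omega
          · have hji : j₀ ≤ j := by omega
            have := dominate hT hc₀ hc (by omega) hji
            omega
      · -- (k, b+1) ∉ D(T')
        rw [mem_excitedDiagram hT']
        rintro ⟨⟨i, j⟩, hc, h1, h2⟩
        simp only at h1 h2
        have hcne : (i, j) ≠ (i₀, j₀) := by
          intro h; rw [h, hT'at] at h1; omega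
        rw [hT'ne _ hcne] at h1 h2
        have hle := row_le hT i j hc
        have hbe : boxMap T (i, j) = boxMap T (i₀, j₀) := by
          simp only [boxMap, Prod.mk.injEq]
          exact ⟨by omega, by omega⟩
        exact hcne (boxMap_injOn hT hc hc₀ hbe)
      · -- diagram equation
        have hbT' : boxMap T' (i₀, j₀) = (k - 1, k - 1 + j₀ - i₀) := by
          simp only [boxMap, hT'at]
        have hbT : boxMap T (i₀, j₀) = (k - 1 + 1, k - 1 + j₀ - i₀ + 1) := by
          simp only [boxMap, hkdef, Prod.mk.injEq]
          omega
        rw [excitedDiagram_eq, excitedDiagram_eq]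
        ext x
        simp only [Set.mem_image, Set.mem_insert_iff, Set.mem_diff, Set.mem_singleton_iff]
        constructor
        · rintro ⟨c, hc, rfl⟩
          rcases eq_or_ne c (i₀, j₀) with rfl | h
          · exact Or.inl hbT
          · have hbc : boxMap T' c = boxMap T c := by
              simp only [boxMap, hT'ne c h]
            refine Or.inr ⟨⟨c, hc, hbc⟩, ?_⟩
            rw [← hbc]
            intro hx
            exact h (boxMap_injOn hT' hc hc₀ (hx.trans hbT'.symm))
        · rintro (rfl | ⟨⟨c, hc, rfl⟩, hne⟩)
          · exact ⟨(i₀, j₀), hc₀, hbT⟩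
          · have h : c ≠ (i₀, j₀) := by
              intro h; subst h; exact hne hbT'
            have hbc : boxMap T' c = boxMap T c := by
              simp only [boxMap, hT'ne c h]
            exact ⟨c, hc, hbc.symm ▸ rfl⟩

lemma excitation_of_ssyt (hT : T ∈ SSYT mu) :
    IsExcitation (cells mu) (excitedDiagram mu T) :=
  excitation_of_ssyt_aux _ T hT rfl

end Aux

namespace Aux

variable {mu lam : YPartition} {T T' : ℕ × ℕ → ℕ}

lemma exists_ssyt_of_excitation {E : Set (ℕ × ℕ)} (h : IsExcitation (cells mu) E) :
    ∃ T ∈ SSYT mu, excitedDiagram mu T = E := by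
  induction h with
  | refl =>
    classical
    have hbase : (fun c : ℕ × ℕ => if c ∈ cells mu then c.1 else 0) ∈ SSYT mu := by
      refine ⟨?_, ?_, ?_, ?_⟩
      · intro c hc; simp only [if_neg hc]
      · intro c hc; simp only [if_pos hc]; exact (mem_cells.mp hc).1
      · intro i j hc1 hc2; simp only [if_pos hc1, if_pos hc2]; omega
      · intro i j hc1 hc2; simp only [if_pos hc1, if_pos hc2]; omega
    refine ⟨_, hbase, ?_⟩
    apply diagram_eq_cells hbase
    intro c hc; simp only [if_pos hc]
  | tail _ hmove ih =>
    classical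
    obtain ⟨T, hT, rfl⟩ := ih
    obtain ⟨p, q, hpq, h2, h3, h4, hE⟩ := hmove
    rw [excitedDiagram_eq] at hpq
    obtain ⟨⟨i₀, j₀⟩, hc₀, hbx⟩ := hpq
    have hi₀ := (mem_cells.mp hc₀).1
    have hj₀ := (mem_cells.mp hc₀).2.1
    have hrl := row_le hT i₀ j₀ hc₀
    have hp : T (i₀, j₀) = p := congrArg Prod.fst hbx
    have hq : T (i₀, j₀) + j₀ - i₀ = q := congrArg Prod.snd hbx
    set T'' := Function.update T (i₀, j₀) (T (i₀, j₀) + 1) with hT''def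
    have hat : T'' (i₀, j₀) = T (i₀, j₀) + 1 := Function.update_self _ _ _
    have hne : ∀ c : ℕ × ℕ, c ≠ (i₀, j₀) → T'' c = T c :=
      fun c hc => Function.update_of_ne hc _ _
    have hT'' : T'' ∈ SSYT mu := by
      refine ⟨?_, ?_, ?_, ?_⟩
      · intro c hc
        rw [hne c (fun h => hc (h ▸ hc₀))]
        exact hT.1 c hc
      · intro c hc
        rcases eq_or_ne c (i₀, j₀) with rfl | h
        · rw [hat]; omega
        · rw [hne c h]; exact hT.2.1 c hc
      · intro i j hc1 hc2
        have hrow := hT.2.2.1 i j hc1 hc2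
        rcases eq_or_ne (i, j) (i₀, j₀) with heq | h
        · have hie : i = i₀ := congrArg Prod.fst heq
          have hje : j = j₀ := congrArg Prod.snd heq
          have e2 : T'' (i, j + 1) = T (i, j + 1) := hne _
            (fun hh => by have := congrArg Prod.snd hh; simp only at this; omega)
          have e3 : T (i, j) = T (i₀, j₀) := by rw [heq]
          rw [heq, hat, e2]
          by_contra hcon
          have hbb : boxMap T (i, j + 1) = (p, q + 1) := by
            simp only [boxMap, Prod.mk.injEq]
            exact ⟨by omega, by omega⟩
          exact h3 (hbb ▸ boxMap_mem hT hc2)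
        · rw [hne (i, j) h]
          rcases eq_or_ne (i, j + 1) (i₀, j₀) with heq | h2'
          · have hje : j + 1 = j₀ := congrArg Prod.snd heq
            have hie : i = i₀ := congrArg Prod.fst heq
            have e3 : T (i, j + 1) = T (i₀, j₀) := by rw [heq]
            rw [heq, hat]
            omega
          · rw [hne (i, j + 1) h2']; exact hrow
      · intro i j hc1 hc2
        have hcol := hT.2.2.2 i j hc1 hc2
        rcases eq_or_ne (i, j) (i₀, j₀) with heq | h
        · have hie : i = i₀ := congrArg Prod.fst heq
          have hje : j = j₀ := congrArg Prod.snd heq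
          have e2 : T'' (i + 1, j) = T (i + 1, j) := hne _
            (fun hh => by have := congrArg Prod.fst hh; simp only at this; omega)
          have e3 : T (i, j) = T (i₀, j₀) := by rw [heq]
          rw [heq, hat, e2]
          by_contra hcon
          have hbb : boxMap T (i + 1, j) = (p + 1, q) := by
            simp only [boxMap, Prod.mk.injEq]
            exact ⟨by omega, by omega⟩
          exact h2 (hbb ▸ boxMap_mem hT hc2)
        · rw [hne (i, j) h]
          rcases eq_or_ne (i + 1, j) (i₀, j₀) with heq | h2'
          · have hje : j = j₀ := congrArg Prod.snd heq
            have hie : i + 1 = i₀ := congrArg Prod.fst heq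
            have e3 : T (i + 1, j) = T (i₀, j₀) := by rw [heq]
            rw [heq, hat]
            omega
          · rw [hne (i + 1, j) h2']; exact hcol
    refine ⟨T'', hT'', ?_⟩
    rw [hE]
    have hbT'' : boxMap T'' (i₀, j₀) = (p + 1, q + 1) := by
      simp only [boxMap, hat, Prod.mk.injEq]
      omega
    rw [excitedDiagram_eq, excitedDiagram_eq]
    ext x
    simp only [Set.mem_image, Set.mem_insert_iff, Set.mem_diff, Set.mem_singleton_iff]
    constructor
    · rintro ⟨c, hc, rfl⟩
      rcases eq_or_ne c (i₀, j₀) with rfl | h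
      · exact Or.inl hbT''
      · have hbc : boxMap T'' c = boxMap T c := by
          simp only [boxMap, hne c h]
        refine Or.inr ⟨⟨c, hc, hbc.symm⟩, ?_⟩
        rw [hbc]
        intro hx
        exact h (boxMap_injOn hT hc hc₀ (hx.trans hbx.symm))
    · rintro (rfl | ⟨⟨c, hc, rfl⟩, hnex⟩)
      · exact ⟨(i₀, j₀), hc₀, hbT''⟩
      · have h : c ≠ (i₀, j₀) := by
          intro h; subst h; exact hnex hbx
        have hbc : boxMap T'' c = boxMap T c := by
          simp only [boxMap, hne c h]
        exact ⟨c, hc, hbc⟩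

lemma le_inducedFlagging_iff {i k : ℕ} (hk : 1 ≤ k) :
    k ≤ inducedFlagging lam mu i ↔
      (mu.get i : ℤ) - (i : ℤ) ≤ (lam.get k : ℤ) - (k : ℤ) := by
  obtain ⟨N, hN⟩ := lam.eventually_zero'
  set S := {k : ℕ | k = 0 ∨ (mu.get i : ℤ) - (i : ℤ) ≤ (lam.get k : ℤ) - (k : ℤ)} with hS
  have hbdd : BddAbove S := by
    refine ⟨max (N + 1) i, fun k' hk' => ?_⟩
    rcases hk' with h0 | hcond
    · omega
    · rcases le_or_gt k' (N + 1) with h | h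
      · omega
      · have hz : lam.get k' = 0 := hN (k' - 1) (by omega)
        rw [hz] at hcond
        have : (mu.get i : ℤ) ≥ 0 := Int.natCast_nonneg _
        omega
  have h0S : (0 : ℕ) ∈ S := Or.inl rfl
  constructor
  · intro h
    have hmem : sSup S ∈ S := Nat.sSup_mem ⟨0, h0S⟩ hbdd
    have hsle : k ≤ sSup S := h
    rcases hmem with h0 | hcond
    · omega
    · have hanti : lam.get (sSup S) ≤ lam.get k := get_antitone lam hsle
      omega
  · intro h
    exact le_csSup hbdd (Or.inr h)

lemma mem_cells_mk {p : YPartition} {i j : ℕ} :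
    (i, j) ∈ cells p ↔ 1 ≤ i ∧ 1 ≤ j ∧ j ≤ p.get i := mem_cells

lemma diagram_subset_iff (hT : T ∈ SSYT mu) :
    excitedDiagram mu T ⊆ cells lam ↔
      ∀ c ∈ cells mu, T c ≤ inducedFlagging lam mu c.1 := by
  constructor
  · rintro h ⟨i, j⟩ hc
    have hic := mem_cells_mk.mp hc
    have hrowend : (i, mu.get i) ∈ cells mu :=
      mem_cells_mk.mpr ⟨hic.1, by omega, le_rfl⟩
    have hrl := row_le hT i (mu.get i) hrowend
    have hbx := h (boxMap_mem hT hrowend)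
    have hbx' : (T (i, mu.get i)) + mu.get i - i ≤
        lam.get (T (i, mu.get i)) := (mem_cells_mk.mp hbx).2.2
    have hcond : (mu.get i : ℤ) - (i : ℤ) ≤
        (lam.get (T (i, mu.get i)) : ℤ) - (T (i, mu.get i) : ℤ) := by omega
    have hke : T (i, mu.get i) ≤ inducedFlagging lam mu i :=
      (le_inducedFlagging_iff (by omega)).mpr hcond
    have := row_mono hT hc hrowend hic.2.2
    show T (i, j) ≤ inducedFlagging lam mu i
    omega
  · rintro hflag x ⟨⟨i, j⟩, hc, rfl⟩
    have hic := mem_cells_mk.mp hc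
    have hrl := row_le hT i j hc
    have hpos := hT.2.1 _ hc
    have hfl : T (i, j) ≤ inducedFlagging lam mu i := hflag (i, j) hc
    have hcond := (le_inducedFlagging_iff (lam := lam) (mu := mu) (i := i)
      (k := T (i, j)) (by omega)).mp hfl
    show (T (i, j), T (i, j) + j - i) ∈ cells lam
    rw [mem_cells_mk]
    refine ⟨by omega, by omega, by omega⟩

lemma diagram_inj_step (hT : T ∈ SSYT mu) (hT' : T' ∈ SSYT mu)
    (hD : excitedDiagram mu T = excitedDiagram mu T') {i : ℕ}
    (hIH : ∀ i' j', i' < i → (i', j') ∈ cells mu → T (i', j') = T' (i', j'))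
    {j : ℕ} (hc : (i, j) ∈ cells mu) : ¬ T' (i, j) < T (i, j) := by
  intro hlt
  have hrl' := row_le hT' i j hc
  have hb : boxMap T' (i, j) ∈ excitedDiagram mu T := by
    rw [hD]; exact boxMap_mem hT' hc
  obtain ⟨⟨a, b⟩, hc'', h1, h2⟩ := (mem_excitedDiagram hT).mp hb
  simp only [boxMap] at h1 h2
  have hrl'' := row_le hT a b hc''
  rcases Nat.lt_trichotomy a i with hai | hai | hai
  · have he := hIH a b hai hc''
    have hd := dominate hT' hc'' hc (by omega) (by omega)
    omega
  · subst hai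
    have : b = j := by omega
    subst this
    omega
  · have hd := dominate hT hc hc'' (by omega) (by omega)
    omega

lemma diagram_inj (hT : T ∈ SSYT mu) (hT' : T' ∈ SSYT mu)
    (hD : excitedDiagram mu T = excitedDiagram mu T') : T = T' := by
  have main : ∀ i j, (i, j) ∈ cells mu → T (i, j) = T' (i, j) := by
    intro i
    induction i using Nat.strong_induction_on with
    | _ i IH =>
      intro j hc
      have h1 := diagram_inj_step hT hT' hD (fun i' j' h hc' => IH i' h j' hc') hc
      have h2 := diagram_inj_step hT' hT hD.symm
        (fun i' j' h hc' => (IH i' h j' hc').symm) hc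
      omega
  funext c
  by_cases hc : c ∈ cells mu
  · obtain ⟨i, j⟩ := c
    exact main i j hc
  · rw [hT.1 c hc, hT'.1 c hc]

lemma mem_FSSYT {b : ℕ → ℕ} :
    T ∈ FSSYT mu b ↔ T ∈ SSYT mu ∧ ∀ c ∈ cells mu, T c ≤ b c.1 := Iff.rfl

lemma main_bijOn (lam mu : YPartition) :
    Set.BijOn (excitedDiagram mu) (FSSYT mu (inducedFlagging lam mu))
      (excitations lam mu) := by
  refine ⟨?_, ?_, ?_⟩
  · intro T hT
    rw [mem_FSSYT] at hT
    exact ⟨excitation_of_ssyt hT.1, (diagram_subset_iff hT.1).mpr hT.2⟩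
  · intro T hT T' hT' hD
    rw [mem_FSSYT] at hT hT'
    exact diagram_inj hT.1 hT'.1 hD
  · rintro E ⟨hex, hsub⟩
    obtain ⟨T, hT, rfl⟩ := exists_ssyt_of_excitation hex
    exact ⟨T, mem_FSSYT.mpr ⟨hT, (diagram_subset_iff hT).mp hsub⟩, rfl⟩

end Aux

/-- For partitions `λ` and `μ`, one has
`s_λ[μ] = Σ_{T ∈ F(λ/μ)} ∏_{(i,j) ∈ Y(μ)} (x_{T(i,j)} + y_{T(i,j)+j−i})`, where
`F(λ/μ) = FSSYT(μ, b)` for `b` the flagging induced by `λ/μ`. -/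
theorem slam_eq_flagged_sum (lam mu : YPartition) :
    slam lam mu =
      ∑ᶠ T ∈ FSSYT mu (inducedFlagging lam mu), ∏ᶠ c ∈ cells mu,
        (xv (T c : ℤ) + yv ((T c : ℤ) + (c.2 : ℤ) - (c.1 : ℤ))) := by
  rw [slam]
  refine (finsum_mem_eq_of_bijOn (excitedDiagram mu) (Aux.main_bijOn lam mu) ?_).symm
  intro T hT
  have hT' := (Aux.mem_FSSYT.mp hT).1
  refine finprod_mem_eq_of_bijOn (Aux.boxMap T)
    ((Aux.boxMap_injOn hT').bijOn_image) ?_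
  rintro ⟨i, j⟩ hc
  have hrl := Aux.row_le hT' i j hc
  have hcast : ((T (i, j) + j - i : ℕ) : ℤ) = (T (i, j) : ℤ) + (j : ℤ) - (i : ℤ) := by
    omega
  simp only [Aux.boxMap, hcast]
end

section
/- Let μ be a partition. The map T ↦ D(T), sending a semistandard tableau of shape μ to the diagram D(T), is a well-defined bijection from SSYT(μ) onto the set of all excitations of the Young diagram Y(μ). -/
section ExcitedAux

variable {mu : YPartition} {T T' : ℕ × ℕ → ℕ}

lemma YPartition.get_anti (p : YPartition) {i j : ℕ} (h : i ≤ j) : p.get j ≤ p.get i :=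
  p.antitone' (Nat.sub_le_sub_right h 1)

lemma mem_cells {c : ℕ × ℕ} : c ∈ cells mu ↔ 1 ≤ c.1 ∧ 1 ≤ c.2 ∧ c.2 ≤ mu.get c.1 := by
  have h0 : YPartition.empty.get c.1 = 0 := rfl
  simp only [cells, skewCells, Set.mem_setOf_eq, h0]
  omega

lemma mem_cells' {i j : ℕ} : (i, j) ∈ cells mu ↔ 1 ≤ i ∧ 1 ≤ j ∧ j ≤ mu.get i := mem_cells

lemma cells_shape {i j i' j' : ℕ} (h : (i, j) ∈ cells mu) (hi1 : 1 ≤ i') (hii : i' ≤ i)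
    (hj1 : 1 ≤ j') (hjj : j' ≤ j) : (i', j') ∈ cells mu := by
  rw [mem_cells'] at h ⊢
  exact ⟨hi1, hj1, le_trans (le_trans hjj h.2.2) (mu.get_anti hii)⟩

lemma cells_finite (mu : YPartition) : (cells mu).Finite := by
  obtain ⟨N, hN⟩ := mu.eventually_zero'
  apply Set.Finite.subset (Set.finite_Icc (1, 1) (N + 1, mu.f 0))
  rintro ⟨i, j⟩ hc
  rw [mem_cells'] at hc
  obtain ⟨h1, h2, h3⟩ := hc
  have hiN : i ≤ N + 1 := by
    by_contra h
    have h4 : mu.get i = 0 := hN _ (by omega)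
    omega
  have h5 : mu.get i ≤ mu.f 0 := mu.antitone' (Nat.zero_le _)
  simp only [Set.mem_Icc, Prod.le_def]
  omega

lemma fst_le (hT : T ∈ SSYT mu) : ∀ {c : ℕ × ℕ}, c ∈ cells mu → c.1 ≤ T c := by
  have key : ∀ i j, (i, j) ∈ cells mu → i ≤ T (i, j) := by
    intro i
    induction i with
    | zero => intro j _; exact Nat.zero_le _
    | succ i ih =>
      intro j hc
      rcases Nat.eq_zero_or_pos i with hi | hi
      · subst hi; exact hT.2.1 _ hc
      · have h1 : (i, j) ∈ cells mu :=
          cells_shape hc hi (Nat.le_succ i) (mem_cells'.mp hc).2.1 le_rfl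
        have h2 := hT.2.2.2 i j h1 hc
        have h3 := ih j h1
        omega
  rintro ⟨i, j⟩ hc
  exact key i j hc

lemma row_mono (hT : T ∈ SSYT mu) {i j : ℕ} (hj1 : 1 ≤ j) :
    ∀ j', j ≤ j' → (i, j') ∈ cells mu → T (i, j) ≤ T (i, j') := by
  intro j'
  induction j' with
  | zero => intro h _; omega
  | succ j' ih =>
    intro hjj h
    rcases Nat.lt_or_ge j (j' + 1) with hlt | hge
    · have hj'1 : 1 ≤ j' := by omega
      have h1 : (i, j') ∈ cells mu :=
        cells_shape h (mem_cells'.mp h).1 le_rfl hj'1 (Nat.le_succ _)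
      exact le_trans (ih (by omega) h1) (hT.2.2.1 i j' h1 h)
    · have hq : j = j' + 1 := by omega
      subst hq; exact le_rfl

lemma col_strict (hT : T ∈ SSYT mu) {i j : ℕ} (hi1 : 1 ≤ i) :
    ∀ i', i < i' → (i', j) ∈ cells mu → T (i, j) < T (i', j) := by
  intro i'
  induction i' with
  | zero => intro h _; omega
  | succ i' ih =>
    intro hii h
    rcases Nat.lt_or_ge i i' with hlt | hge
    · have h1 : (i', j) ∈ cells mu :=
        cells_shape h (by omega) (Nat.le_succ _) (mem_cells'.mp h).2.1 le_rfl
      exact lt_trans (ih hlt h1) (hT.2.2.2 i' j h1 h)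
    · have hq : i = i' := by omega
      subst hq
      have h1 : (i, j) ∈ cells mu :=
        cells_shape h hi1 (Nat.le_succ _) (mem_cells'.mp h).2.1 le_rfl
      exact hT.2.2.2 i j h1 h

lemma lt_dom (hT : T ∈ SSYT mu) {i j i' j' : ℕ} (hb : (i, j) ∈ cells mu)
    (hc : (i', j') ∈ cells mu) (h1 : i < i') (h2 : j ≤ j') : T (i, j) < T (i', j') := by
  have hj1 : 1 ≤ j := (mem_cells'.mp hb).2.1
  have hi1 : 1 ≤ i := (mem_cells'.mp hb).1
  have hm : (i, j') ∈ cells mu :=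
    cells_shape hc hi1 (le_of_lt h1) (by omega) le_rfl
  exact lt_of_le_of_lt (row_mono hT hj1 j' h2 hm) (col_strict hT hi1 i' h1 hc)

lemma lt_diag (hT : T ∈ SSYT mu) {i j i' j' : ℕ} (hb : (i, j) ∈ cells mu)
    (hc : (i', j') ∈ cells mu) (h1 : i < i') (h2 : j + i' = j' + i) : T (i, j) < T (i', j') :=
  lt_dom hT hb hc h1 (by omega)

lemma injF (hT : T ∈ SSYT mu) :
    Set.InjOn (fun c : ℕ × ℕ => (T c, T c + c.2 - c.1)) (cells mu) := by
  rintro ⟨i, j⟩ hb ⟨i', j'⟩ hc heq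
  have h1 : T (i, j) = T (i', j') := congrArg Prod.fst heq
  have h2 : T (i, j) + j - i = T (i', j') + j' - i' := congrArg Prod.snd heq
  have hb1 : i ≤ T (i, j) := fst_le hT hb
  have hc1 : i' ≤ T (i', j') := fst_le hT hc
  have hd : j + i' = j' + i := by omega
  rcases lt_trichotomy i i' with h | h | h
  · exact absurd (lt_diag hT hb hc h hd) (by omega)
  · exact Prod.ext (by omega) (by omega)
  · exact absurd (lt_diag hT hc hb h (by omega)) (by omega)

open Classical in
noncomputable def baseT (mu : YPartition) : ℕ × ℕ → ℕ :=
  fun c => if c ∈ cells mu then c.1 else 0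

lemma baseT_mem : baseT mu ∈ SSYT mu := by
  classical
  refine ⟨?_, ?_, ?_, ?_⟩
  · intro c hc; simp [baseT, hc]
  · intro c hc
    simp only [baseT, if_pos hc]
    exact (mem_cells.mp hc).1
  · intro i j h1 h2
    simp only [baseT, if_pos h1, if_pos h2]
    omega
  · intro i j h1 h2
    simp only [baseT, if_pos h1, if_pos h2]
    omega

lemma baseD : excitedDiagram mu (baseT mu) = cells mu := by
  classical
  ext e
  simp only [excitedDiagram, Set.mem_image]
  constructor
  · rintro ⟨⟨i, j⟩, hc, rfl⟩
    have h1 : baseT mu (i, j) = i := if_pos hc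
    have hj1 : 1 ≤ j := (mem_cells'.mp hc).2.1
    have h3 : (baseT mu (i, j), baseT mu (i, j) + (i, j).2 - (i, j).1) = (i, j) :=
      Prod.ext (by omega) (by omega)
    rw [h3]; exact hc
  · intro he
    refine ⟨e, he, ?_⟩
    obtain ⟨i, j⟩ := e
    have h1 : baseT mu (i, j) = i := if_pos he
    exact Prod.ext (by omega) (by omega)

lemma excitation_of_mem (mu : YPartition) :
    ∀ T ∈ SSYT mu, IsExcitation (cells mu) (excitedDiagram mu T) := by
  classical
  set F : Finset (ℕ × ℕ) := (cells_finite mu).toFinset with hF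
  have hFmem : ∀ c : ℕ × ℕ, c ∈ F ↔ c ∈ cells mu := fun c => (cells_finite mu).mem_toFinset
  suffices key : ∀ n, ∀ T ∈ SSYT mu, (∑ c ∈ F, (T c - c.1)) = n →
      IsExcitation (cells mu) (excitedDiagram mu T) by
    intro T hT; exact key _ T hT rfl
  intro n
  induction n with
  | zero =>
    intro T hT hsum
    have hzero : ∀ c ∈ F, T c - c.1 = 0 := Finset.sum_eq_zero_iff.mp hsum
    have hD : excitedDiagram mu T = cells mu := by
      ext e
      simp only [excitedDiagram, Set.mem_image]
      constructor
      · rintro ⟨⟨i, j⟩, hc, rfl⟩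
        have h1 : i ≤ T (i, j) := fst_le hT hc
        have h2 : T (i, j) - i = 0 := hzero (i, j) ((hFmem (i, j)).mpr hc)
        have h3 : (T (i, j), T (i, j) + (i, j).2 - (i, j).1) = (i, j) :=
          Prod.ext (by omega) (by omega)
        rw [h3]; exact hc
      · intro he
        refine ⟨e, he, ?_⟩
        obtain ⟨i, j⟩ := e
        have h1 : i ≤ T (i, j) := fst_le hT he
        have h2 : T (i, j) - i = 0 := hzero (i, j) ((hFmem (i, j)).mpr he)
        exact Prod.ext (by omega) (by omega)
    rw [hD]
    exact Relation.ReflTransGen.refl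
  | succ n ih =>
    intro T hT hsum
    have hFne : ∃ c ∈ F, T c - c.1 ≠ 0 := by
      apply Finset.exists_ne_zero_of_sum_ne_zero
      rw [hsum]; omega
    obtain ⟨c₁, hc₁F, hc₁⟩ := hFne
    set M := F.sup (fun c => T c - c.1) with hM
    have hMpos : 1 ≤ M :=
      le_trans (Nat.one_le_iff_ne_zero.mpr hc₁) (Finset.le_sup (f := fun c => T c - c.1) hc₁F)
    have hMle : ∀ p q : ℕ, (p, q) ∈ cells mu → T (p, q) - p ≤ M :=
      fun p q hc => Finset.le_sup (f := fun c => T c - c.1) ((hFmem _).mpr hc)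
    obtain ⟨c₂, hc₂F, hc₂⟩ := Finset.exists_mem_eq_sup F ⟨c₁, hc₁F⟩ (fun c => T c - c.1)
    set S := F.filter (fun c => T c - c.1 = M) with hS
    have hSne : S.Nonempty := ⟨c₂, Finset.mem_filter.mpr ⟨hc₂F, hc₂.symm⟩⟩
    obtain ⟨c₀, hc₀S, hc₀min⟩ := Finset.exists_min_image S (fun c => c.1 + c.2) hSne
    obtain ⟨hc₀F, hc₀M⟩ := Finset.mem_filter.mp hc₀S
    have hc₀cells : c₀ ∈ cells mu := (hFmem c₀).mp hc₀F
    obtain ⟨i, j⟩ := c₀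
    have hmin : ∀ p q : ℕ, (p, q) ∈ cells mu → T (p, q) - p = M → i + j ≤ p + q :=
      fun p q hb hbM => hc₀min (p, q) (Finset.mem_filter.mpr ⟨(hFmem _).mpr hb, hbM⟩)
    have htM : T (i, j) - i = M := hc₀M
    have hti : i ≤ T (i, j) := fst_le hT hc₀cells
    have hi1 : 1 ≤ i := (mem_cells'.mp hc₀cells).1
    have hj1 : 1 ≤ j := (mem_cells'.mp hc₀cells).2.1
    have hti2 : i + 1 ≤ T (i, j) := by omega
    set T'' : ℕ × ℕ → ℕ := Function.update T (i, j) (T (i, j) - 1) with hT''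
    have hT'same : ∀ b : ℕ × ℕ, b ≠ (i, j) → T'' b = T b :=
      fun b hb => Function.update_of_ne hb _ _
    have hT'c : T'' (i, j) = T (i, j) - 1 := Function.update_self _ _ _
    have hT''mem : T'' ∈ SSYT mu := by
      refine ⟨?_, ?_, ?_, ?_⟩
      · intro c hc
        have hne : c ≠ (i, j) := fun h => hc (h ▸ hc₀cells)
        rw [hT'same c hne]; exact hT.1 c hc
      · intro c hc
        by_cases h : c = (i, j)
        · rw [h, hT'c]; omega
        · rw [hT'same c h]; exact hT.2.1 c hc
      · intro p q h1 h2
        by_cases e1 : (p, q) = (i, j)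
        · have hp : p = i := congrArg Prod.fst e1
          have hq : q = j := congrArg Prod.snd e1
          have e2 : (p, q + 1) ≠ (i, j) := by
            intro h
            have h3 : q + 1 = j := congrArg Prod.snd h
            omega
          rw [e1, hT'c, hT'same _ e2]
          have h4 := hT.2.2.1 p q h1 h2
          have h5 : T (p, q) = T (i, j) := by rw [e1]
          omega
        · by_cases e2 : (p, q + 1) = (i, j)
          · rw [hT'same _ e1, e2, hT'c]
            have hp : p = i := congrArg Prod.fst e2
            have hq : q + 1 = j := congrArg Prod.snd e2
            have hr : T (p, q) ≤ T (p, q + 1) := hT.2.2.1 p q h1 h2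
            have h5 : T (p, q + 1) = T (i, j) := by rw [e2]
            have hq1 : 1 ≤ q := (mem_cells'.mp h1).2.1
            have hple : p ≤ T (p, q) := fst_le hT h1
            rcases Nat.lt_or_ge (T (p, q)) (T (i, j)) with hc1 | hc1
            · omega
            · exfalso
              have hm : T (p, q) - p = M := by omega
              have h6 := hmin p q h1 hm
              omega
          · rw [hT'same _ e1, hT'same _ e2]
            exact hT.2.2.1 p q h1 h2
      · intro p q h1 h2
        by_cases e1 : (p, q) = (i, j)
        · have hp : p = i := congrArg Prod.fst e1
          have e2 : (p + 1, q) ≠ (i, j) := by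
            intro h
            have h3 : p + 1 = i := congrArg Prod.fst h
            omega
          rw [e1, hT'c, hT'same _ e2]
          have h4 := hT.2.2.2 p q h1 h2
          have h5 : T (p, q) = T (i, j) := by rw [e1]
          omega
        · by_cases e2 : (p + 1, q) = (i, j)
          · rw [hT'same _ e1, e2, hT'c]
            have hp : p + 1 = i := congrArg Prod.fst e2
            have hq : q = j := congrArg Prod.snd e2
            have hr : T (p, q) < T (p + 1, q) := hT.2.2.2 p q h1 h2
            have h5 : T (p + 1, q) = T (i, j) := by rw [e2]
            have hp1 : 1 ≤ p := (mem_cells'.mp h1).1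
            have hple : p ≤ T (p, q) := fst_le hT h1
            rcases Nat.lt_or_ge (T (p, q)) (T (i, j) - 1) with hc1 | hc1
            · omega
            · exfalso
              have hm : T (p, q) - p = M := by omega
              have h6 := hmin p q h1 hm
              omega
          · rw [hT'same _ e1, hT'same _ e2]
            exact hT.2.2.2 p q h1 h2
    have hsum' : (∑ c ∈ F, (T'' c - c.1)) = n := by
      have e1 : T (i, j) - i + ∑ c ∈ F.erase (i, j), (T c - c.1) = ∑ c ∈ F, (T c - c.1) :=
        Finset.add_sum_erase F (fun c => T c - c.1) ((hFmem _).mpr hc₀cells)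
      have e2 : T'' (i, j) - i + ∑ c ∈ F.erase (i, j), (T'' c - c.1) = ∑ c ∈ F, (T'' c - c.1) :=
        Finset.add_sum_erase F (fun c => T'' c - c.1) ((hFmem _).mpr hc₀cells)
      have e3 : ∑ c ∈ F.erase (i, j), (T'' c - c.1) = ∑ c ∈ F.erase (i, j), (T c - c.1) :=
        Finset.sum_congr rfl (fun c hc => by rw [hT'same c (Finset.ne_of_mem_erase hc)])
      rw [hT'c] at e2
      omega
    have hstep : ExcitedMove (excitedDiagram mu T'') (excitedDiagram mu T) := by
      refine ⟨T (i, j) - 1, T (i, j) - 1 + j - i, ?_, ?_, ?_, ?_, ?_⟩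
      · refine ⟨(i, j), hc₀cells, ?_⟩
        show (T'' (i, j), T'' (i, j) + j - i) = (T (i, j) - 1, T (i, j) - 1 + j - i)
        rw [hT'c]
      · rintro ⟨⟨p, q⟩, hb, heq⟩
        have h1 : T'' (p, q) = T (i, j) - 1 + 1 := congrArg Prod.fst heq
        have h2 : T'' (p, q) + q - p = T (i, j) - 1 + j - i := congrArg Prod.snd heq
        have hbne : (p, q) ≠ (i, j) := by
          intro h
          rw [h, hT'c] at h1
          omega
        rw [hT'same _ hbne] at h1 h2
        have hple : p ≤ T (p, q) := fst_le hT hb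
        have hdiag : q + i + 1 = j + p := by omega
        rcases lt_trichotomy p i with hp | hp | hp
        · obtain ⟨hp1, hq1, hq2⟩ := mem_cells'.mp hb
          have hr : (p, q + 1) ∈ cells mu := by
            rw [mem_cells']
            have hgp : mu.get i ≤ mu.get p := mu.get_anti (le_of_lt hp)
            have hc' : j ≤ mu.get i := (mem_cells'.mp hc₀cells).2.2
            omega
          have h3 : T (p, q) ≤ T (p, q + 1) := hT.2.2.1 p q hb hr
          have h4 : T (p, q + 1) < T (i, j) := lt_diag hT hr hc₀cells hp (by omega)
          omega
        · obtain ⟨hp1, hq1, hq2⟩ := mem_cells'.mp hb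
          have hm : T (p, q) - p = M := by omega
          have h6 := hmin p q hb hm
          omega
        · have h4 := lt_dom hT hc₀cells hb hp (by omega)
          omega
      · rintro ⟨⟨p, q⟩, hb, heq⟩
        have h1 : T'' (p, q) = T (i, j) - 1 := congrArg Prod.fst heq
        have h2 : T'' (p, q) + q - p = T (i, j) - 1 + j - i + 1 := congrArg Prod.snd heq
        by_cases hbe : (p, q) = (i, j)
        · have hp : p = i := congrArg Prod.fst hbe
          have hq : q = j := congrArg Prod.snd hbe
          rw [hbe, hT'c] at h1 h2
          omega
        · rw [hT'same _ hbe] at h1 h2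
          have hple : p ≤ T (p, q) := fst_le hT hb
          have hdiag : q + i = j + p + 1 := by omega
          rcases lt_trichotomy p i with hp | hp | hp
          · have hM1 : T (p, q) - p ≤ M := hMle p q hb
            have hm : T (p, q) - p = M := by omega
            have h6 := hmin p q hb hm
            omega
          · have hpq : (p, q) = (i, j + 1) := Prod.ext (by omega) (by omega)
            rw [hpq] at hb h1
            have h3 := hT.2.2.1 i j hc₀cells hb
            omega
          · have h4 := lt_dom hT hc₀cells hb hp (by omega)
            omega
      · rintro ⟨⟨p, q⟩, hb, heq⟩
        have h1 : T'' (p, q) = T (i, j) - 1 + 1 := congrArg Prod.fst heq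
        have h2 : T'' (p, q) + q - p = T (i, j) - 1 + j - i + 1 := congrArg Prod.snd heq
        have hbne : (p, q) ≠ (i, j) := by
          intro h
          rw [h, hT'c] at h1
          omega
        rw [hT'same _ hbne] at h1 h2
        have hple : p ≤ T (p, q) := fst_le hT hb
        have hdiag : q + i = j + p := by omega
        rcases lt_trichotomy p i with hp | hp | hp
        · have h4 := lt_diag hT hb hc₀cells hp (by omega)
          omega
        · exact hbne (Prod.ext (by omega) (by omega))
        · have h4 := lt_diag hT hc₀cells hb hp (by omega)
          omega
      · ext e
        simp only [excitedDiagram, Set.mem_image, Set.mem_insert_iff, Set.mem_diff,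
          Set.mem_singleton_iff]
        constructor
        · rintro ⟨⟨p, q⟩, hb, rfl⟩
          by_cases hbe : (p, q) = (i, j)
          · left
            have hp : p = i := congrArg Prod.fst hbe
            have hq : q = j := congrArg Prod.snd hbe
            have h5 : T (p, q) = T (i, j) := by rw [hbe]
            exact Prod.ext (by omega) (by omega)
          · right
            refine ⟨⟨(p, q), hb, by rw [hT'same _ hbe]⟩, ?_⟩
            intro hcontra
            apply hbe
            refine injF hT''mem hb hc₀cells ?_
            show (T'' (p, q), T'' (p, q) + q - p) = (T'' (i, j), T'' (i, j) + j - i)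
            have ha1 : T (p, q) = T (i, j) - 1 := congrArg Prod.fst hcontra
            have ha2 : T (p, q) + (p, q).2 - (p, q).1 = T (i, j) - 1 + j - i :=
              congrArg Prod.snd hcontra
            have hple : p ≤ T (p, q) := fst_le hT hb
            rw [hT'same _ hbe, hT'c]
            exact Prod.ext (by omega) (by omega)
        · rintro (he | ⟨⟨⟨p, q⟩, hb, rfl⟩, hne⟩)
          · refine ⟨(i, j), hc₀cells, ?_⟩
            rw [he]
            exact Prod.ext (by omega) (by omega)
          · have hbe : (p, q) ≠ (i, j) := by
              intro h
              apply hne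
              have hp : p = i := congrArg Prod.fst h
              have hq : q = j := congrArg Prod.snd h
              have h5 : T'' (p, q) = T (i, j) - 1 := by rw [h, hT'c]
              exact Prod.ext (by omega) (by omega)
            exact ⟨(p, q), hb, by rw [hT'same _ hbe]⟩
    exact Relation.ReflTransGen.tail (ih T'' hT''mem hsum') hstep

lemma exists_ssyt_of_excitation (mu : YPartition) {E : Set (ℕ × ℕ)}
    (hE : IsExcitation (cells mu) E) : ∃ T ∈ SSYT mu, excitedDiagram mu T = E := by
  induction hE with
  | refl => exact ⟨baseT mu, baseT_mem, baseD⟩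
  | @tail B C hAB hBC ih =>
    obtain ⟨T, hT, rfl⟩ := ih
    obtain ⟨x, y, hxy, hnd, hnr, hndr, hCeq⟩ := hBC
    obtain ⟨⟨i, j⟩, hb, hFb⟩ := hxy
    have h1 : T (i, j) = x := congrArg Prod.fst hFb
    have h2 : T (i, j) + j - i = y := congrArg Prod.snd hFb
    have hti : i ≤ T (i, j) := fst_le hT hb
    have hi1 : 1 ≤ i := (mem_cells'.mp hb).1
    have hj1 : 1 ≤ j := (mem_cells'.mp hb).2.1
    set T'' : ℕ × ℕ → ℕ := Function.update T (i, j) (T (i, j) + 1) with hT''def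
    have hT'same : ∀ b : ℕ × ℕ, b ≠ (i, j) → T'' b = T b :=
      fun b hb => Function.update_of_ne hb _ _
    have hT'c : T'' (i, j) = T (i, j) + 1 := Function.update_self _ _ _
    have hR : (i, j + 1) ∈ cells mu → T (i, j) + 1 ≤ T (i, j + 1) := by
      intro hr
      have hle : T (i, j) ≤ T (i, j + 1) := hT.2.2.1 i j hb hr
      rcases Nat.lt_or_ge (T (i, j)) (T (i, j + 1)) with h | h
      · omega
      · exfalso
        apply hnr
        refine ⟨(i, j + 1), hr, ?_⟩
        show (T (i, j + 1), T (i, j + 1) + (j + 1) - i) = (x, y + 1)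
        exact Prod.ext (by omega) (by omega)
    have hD : (i + 1, j) ∈ cells mu → T (i, j) + 2 ≤ T (i + 1, j) := by
      intro hr
      have hle : T (i, j) < T (i + 1, j) := hT.2.2.2 i j hb hr
      rcases Nat.lt_or_ge (T (i, j) + 1) (T (i + 1, j)) with h | h
      · omega
      · exfalso
        apply hnd
        refine ⟨(i + 1, j), hr, ?_⟩
        show (T (i + 1, j), T (i + 1, j) + j - (i + 1)) = (x + 1, y)
        exact Prod.ext (by omega) (by omega)
    have hT''mem : T'' ∈ SSYT mu := by
      refine ⟨?_, ?_, ?_, ?_⟩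
      · intro c hc
        have hne : c ≠ (i, j) := fun h => hc (h ▸ hb)
        rw [hT'same c hne]; exact hT.1 c hc
      · intro c hc
        by_cases h : c = (i, j)
        · rw [h, hT'c]; omega
        · rw [hT'same c h]; exact hT.2.1 c hc
      · intro p q hp1 hp2
        by_cases e1 : (p, q) = (i, j)
        · have hp : p = i := congrArg Prod.fst e1
          have hq : q = j := congrArg Prod.snd e1
          have e2 : (p, q + 1) ≠ (i, j) := by
            intro h
            have h3 : q + 1 = j := congrArg Prod.snd h
            omega
          rw [e1, hT'c, hT'same _ e2]
          have hpq : (p, q + 1) = (i, j + 1) := Prod.ext (by omega) (by omega)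
          rw [hpq] at hp2 ⊢
          exact hR hp2
        · by_cases e2 : (p, q + 1) = (i, j)
          · rw [hT'same _ e1, e2, hT'c]
            have hr : T (p, q) ≤ T (p, q + 1) := hT.2.2.1 p q hp1 hp2
            have h5 : T (p, q + 1) = T (i, j) := by rw [e2]
            omega
          · rw [hT'same _ e1, hT'same _ e2]
            exact hT.2.2.1 p q hp1 hp2
      · intro p q hp1 hp2
        by_cases e1 : (p, q) = (i, j)
        · have hp : p = i := congrArg Prod.fst e1
          have hq : q = j := congrArg Prod.snd e1
          have e2 : (p + 1, q) ≠ (i, j) := by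
            intro h
            have h3 : p + 1 = i := congrArg Prod.fst h
            omega
          rw [e1, hT'c, hT'same _ e2]
          have hpq : (p + 1, q) = (i + 1, j) := Prod.ext (by omega) (by omega)
          rw [hpq] at hp2 ⊢
          have := hD hp2
          omega
        · by_cases e2 : (p + 1, q) = (i, j)
          · rw [hT'same _ e1, e2, hT'c]
            have hr : T (p, q) < T (p + 1, q) := hT.2.2.2 p q hp1 hp2
            have h5 : T (p + 1, q) = T (i, j) := by rw [e2]
            omega
          · rw [hT'same _ e1, hT'same _ e2]
            exact hT.2.2.2 p q hp1 hp2
    refine ⟨T'', hT''mem, ?_⟩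
    rw [hCeq]
    ext e
    simp only [excitedDiagram, Set.mem_image, Set.mem_insert_iff, Set.mem_diff,
      Set.mem_singleton_iff]
    constructor
    · rintro ⟨⟨p, q⟩, hbc, rfl⟩
      by_cases hbe : (p, q) = (i, j)
      · left
        have hp : p = i := congrArg Prod.fst hbe
        have hq : q = j := congrArg Prod.snd hbe
        have h5 : T'' (p, q) = T (i, j) + 1 := by rw [hbe, hT'c]
        exact Prod.ext (by omega) (by omega)
      · right
        rw [hT'same _ hbe]
        refine ⟨⟨(p, q), hbc, rfl⟩, ?_⟩
        intro hcontra
        apply hbe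
        refine injF hT hbc hb ?_
        show (T (p, q), T (p, q) + q - p) = (T (i, j), T (i, j) + j - i)
        have ha1 : T (p, q) = x := congrArg Prod.fst hcontra
        have ha2 : T (p, q) + (p, q).2 - (p, q).1 = y := congrArg Prod.snd hcontra
        have hple : p ≤ T (p, q) := fst_le hT hbc
        exact Prod.ext (by omega) (by omega)
    · rintro (he | ⟨⟨⟨p, q⟩, hbc, rfl⟩, hne⟩)
      · refine ⟨(i, j), hb, ?_⟩
        rw [he]
        have h5 : T'' (i, j) = T (i, j) + 1 := hT'c
        exact Prod.ext (by omega) (by omega)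
      · have hbe : (p, q) ≠ (i, j) := by
          intro h
          apply hne
          have hp : p = i := congrArg Prod.fst h
          have hq : q = j := congrArg Prod.snd h
          have h5 : T (p, q) = T (i, j) := by rw [h]
          exact Prod.ext (by omega) (by omega)
        exact ⟨(p, q), hbc, by rw [hT'same _ hbe]⟩

lemma aux_inj (hT : T ∈ SSYT mu) (hT' : T' ∈ SSYT mu)
    (hDD : excitedDiagram mu T = excitedDiagram mu T') {i j : ℕ} (hc : (i, j) ∈ cells mu)
    (hlt : T (i, j) < T' (i, j)) :
    ∃ b ∈ cells mu, b.1 < i ∧ T b ≠ T' b ∧ min (T b) (T' b) ≤ T (i, j) := by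
  have hmem : (T (i, j), T (i, j) + (i, j).2 - (i, j).1) ∈ excitedDiagram mu T' := by
    rw [← hDD]; exact ⟨(i, j), hc, rfl⟩
  obtain ⟨⟨p, q⟩, hb, heq⟩ := hmem
  have h1 : T' (p, q) = T (i, j) := congrArg Prod.fst heq
  have h2 : T' (p, q) + q - p = T (i, j) + (i, j).2 - (i, j).1 := congrArg Prod.snd heq
  have hp1 : p ≤ T' (p, q) := fst_le hT' hb
  have hi1 : i ≤ T (i, j) := fst_le hT hc
  have hdiag : q + i = j + p := by omega
  rcases lt_trichotomy p i with hp | hp | hp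
  · refine ⟨(p, q), hb, hp, ?_, ?_⟩
    · intro h
      have := lt_diag hT hb hc hp (by omega)
      omega
    · have := min_le_right (T (p, q)) (T' (p, q))
      omega
  · have hpq : (p, q) = (i, j) := Prod.ext (by omega) (by omega)
    rw [hpq] at h1
    omega
  · have := lt_diag hT' hc hb hp (by omega)
    omega

lemma injOn_excitedDiagram (mu : YPartition) : Set.InjOn (excitedDiagram mu) (SSYT mu) := by
  classical
  intro T hT T' hT' hDD
  by_contra hne
  have hex : ∃ c : ℕ × ℕ, T c ≠ T' c := by
    by_contra h; push_neg at h; exact hne (funext h)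
  have hcells : ∀ c : ℕ × ℕ, T c ≠ T' c → c ∈ cells mu := by
    intro c hc
    by_contra h
    rw [hT.1 c h, hT'.1 c h] at hc
    exact hc rfl
  set F : Finset (ℕ × ℕ) := (cells_finite mu).toFinset with hFdef
  set S : Finset (ℕ × ℕ) := F.filter (fun c => T c ≠ T' c) with hSdef
  have hSne : S.Nonempty := by
    obtain ⟨c, hc⟩ := hex
    exact ⟨c, Finset.mem_filter.mpr ⟨(cells_finite mu).mem_toFinset.mpr (hcells c hc), hc⟩⟩
  obtain ⟨c₁, hc₁, hc₁min⟩ := Finset.exists_min_image S (fun c => min (T c) (T' c)) hSne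
  set m0 := min (T c₁) (T' c₁) with hm0
  set S' : Finset (ℕ × ℕ) := S.filter (fun c => min (T c) (T' c) = m0) with hS'def
  have hS'ne : S'.Nonempty := ⟨c₁, Finset.mem_filter.mpr ⟨hc₁, rfl⟩⟩
  obtain ⟨c₀, hc₀, hc₀min⟩ := Finset.exists_min_image S' (fun c => c.1) hS'ne
  obtain ⟨hc₀S, hc₀m⟩ := Finset.mem_filter.mp hc₀
  obtain ⟨hc₀F, hc₀ne⟩ := Finset.mem_filter.mp hc₀S
  have hc₀cells : c₀ ∈ cells mu := (cells_finite mu).mem_toFinset.mp hc₀F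
  obtain ⟨i, j⟩ := c₀
  have hne0 : T (i, j) ≠ T' (i, j) := hc₀ne
  have hm0eq : min (T (i, j)) (T' (i, j)) = m0 := hc₀m
  rcases lt_or_gt_of_ne hne0 with hlt | hlt
  · obtain ⟨b, hbc, hb1, hbne, hbmin⟩ := aux_inj hT hT' hDD hc₀cells hlt
    have hbS : b ∈ S := Finset.mem_filter.mpr ⟨(cells_finite mu).mem_toFinset.mpr hbc, hbne⟩
    have hge : m0 ≤ min (T b) (T' b) := hc₁min b hbS
    have hbS' : b ∈ S' := Finset.mem_filter.mpr ⟨hbS, show min (T b) (T' b) = m0 by omega⟩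
    have hle2 : i ≤ b.1 := hc₀min b hbS'
    omega
  · obtain ⟨b, hbc, hb1, hbne, hbmin⟩ := aux_inj hT' hT hDD.symm hc₀cells hlt
    have hbS : b ∈ S := Finset.mem_filter.mpr
      ⟨(cells_finite mu).mem_toFinset.mpr hbc, Ne.symm hbne⟩
    have hge : m0 ≤ min (T b) (T' b) := hc₁min b hbS
    have hbS' : b ∈ S' := Finset.mem_filter.mpr ⟨hbS, show min (T b) (T' b) = m0 by omega⟩
    have hle2 : i ≤ b.1 := hc₀min b hbS'
    omega

end ExcitedAux

/-- The map `T ↦ D(T)` is a well-defined bijection from `SSYT(μ)` onto the set of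
all excitations of the Young diagram `Y(μ)`. -/
theorem excitedDiagram_bijOn (mu : YPartition) :
    Set.BijOn (excitedDiagram mu) (SSYT mu)
      {E : Set (ℕ × ℕ) | IsExcitation (cells mu) E} := by
  refine ⟨fun T hT => excitation_of_mem mu T hT, injOn_excitedDiagram mu, ?_⟩
  intro E hE
  obtain ⟨T, hT, hTE⟩ := exists_ssyt_of_excitation mu hE
  exact ⟨T, hT, hTE⟩
end
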